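/- arXiv:1405.1816 — 9 statements merged into one kernel-verified Lean document; each statement's English description precedes it below -/
import Mathlib

section
/- Let μ be a finite measure on ℕ with μ({1}) = 0 and μ({0}) > 0, and suppose Σ_{n≥0} n·μ({n}) < ∞. Define Φ(s) = Σ_{n≥0} (s^n − s)·μ({n}) for s ∈ [0,1] and η = inf{u > 0 : Φ(u) = 0}. Then 0 < η ≤ 1, Φ > 0 on [0,η), ∫_0^η du/Φ(u) = ∞, and the map F(t) = ∫_0^t du/Φ(u) is a strictly increasing bijection from (0,η) onto (0,∞). -/
/-!
Each `s ↦ sⁿ - s` is convex on `[0, 1]`, so `Φ` is a convex function there with `Φ 0 = μ{0} > 0`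
and `Φ 1 = 0`. Hence the first positive zero `η` of `Φ` lies in `(0, 1]`, `Φ > 0` on `[0, η)` by
the intermediate value theorem, and convexity puts `Φ` below the chord `Φ 0 (η - u) / η`. So
`1 / Φ u ≥ η / (Φ 0 (η - u))`, which is not integrable at `η`: the primitive `F` of the positive
continuous function `1 / Φ` increases continuously from `F 0 = 0` to `∞` on `(0, η)`.
-/

open MeasureTheory Set Filter Topology
open scoped ENNReal

noncomputable def phi (a : ℕ → ℝ) (s : ℝ) : ℝ := ∑' n, (s ^ n - s) * a n

section Phi

variable {a : ℕ → ℝ}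

lemma abs_pow_sub_self_le_one {s : ℝ} (hs : s ∈ Icc (0 : ℝ) 1) (n : ℕ) : |s ^ n - s| ≤ 1 :=
  abs_sub_le_of_nonneg_of_le (pow_nonneg hs.1 n) (pow_le_one₀ hs.1 hs.2) hs.1 hs.2

lemma norm_pow_sub_self_mul_le (ha : 0 ≤ a) {s : ℝ} (hs : s ∈ Icc (0 : ℝ) 1) (n : ℕ) :
    ‖(s ^ n - s) * a n‖ ≤ a n := by
  rw [norm_mul, Real.norm_eq_abs, Real.norm_of_nonneg (ha n)]
  exact mul_le_of_le_one_left (ha n) (abs_pow_sub_self_le_one hs n)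

lemma summable_pow_sub_self_mul (ha : 0 ≤ a) (hsa : Summable a) {s : ℝ}
    (hs : s ∈ Icc (0 : ℝ) 1) : Summable fun n => (s ^ n - s) * a n :=
  hsa.of_norm_bounded (norm_pow_sub_self_mul_le ha hs)

lemma continuousOn_phi (ha : 0 ≤ a) (hsa : Summable a) : ContinuousOn (phi a) (Icc 0 1) :=
  continuousOn_tsum (fun _ => by fun_prop) hsa fun _ _ hs => norm_pow_sub_self_mul_le ha hs _

lemma phi_zero : phi a 0 = a 0 := by
  rw [phi, tsum_eq_single 0 fun n hn => by simp [zero_pow hn]]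
  simp

lemma phi_one : phi a 1 = 0 := by
  simp [phi]

lemma convexOn_phi (ha : 0 ≤ a) (hsa : Summable a) : ConvexOn ℝ (Icc 0 1) (phi a) := by
  refine ⟨convex_Icc 0 1, fun x hx y hy α β hα hβ hαβ => ?_⟩
  have hterm (n : ℕ) : ((α * x + β * y) ^ n - (α * x + β * y)) * a n ≤
      α * ((x ^ n - x) * a n) + β * ((y ^ n - y) * a n) := by
    have hconv := ((convexOn_pow n).sub (concaveOn_id (convex_Ici 0))).2
      (Ici_subset_Ici.2 le_rfl hx.1) (Ici_subset_Ici.2 le_rfl hy.1) hα hβ hαβ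
    simp only [smul_eq_mul, Pi.sub_apply, id] at hconv
    linarith [mul_le_mul_of_nonneg_right hconv (ha n)]
  have hx' := (summable_pow_sub_self_mul ha hsa hx).mul_left α
  have hy' := (summable_pow_sub_self_mul ha hsa hy).mul_left β
  calc phi a (α • x + β • y)
      ≤ ∑' n, (α * ((x ^ n - x) * a n) + β * ((y ^ n - y) * a n)) :=
        (summable_pow_sub_self_mul ha hsa (convex_Icc 0 1 hx hy hα hβ hαβ)).tsum_le_tsum
          hterm (hx'.add hy')
    _ = α • phi a x + β • phi a y := by
        rw [hx'.tsum_add hy', tsum_mul_left, tsum_mul_left]; rfl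

end Phi

lemma ConvexOn.le_chord_to_zero {f : ℝ → ℝ} {s : Set ℝ} {η u : ℝ} (hf : ConvexOn ℝ s f)
    (h0 : 0 ∈ s) (hη : η ∈ s) (hη_pos : 0 < η) (hfη : f η = 0) (hu : u ∈ Icc 0 η) :
    f u ≤ f 0 / η * (η - u) := by
  have key := hf.2 h0 hη (div_nonneg (sub_nonneg.2 hu.2) hη_pos.le) (div_nonneg hu.1 hη_pos.le)
    (by field_simp; ring)
  have hcomb : ((η - u) / η) • (0 : ℝ) + (u / η) • η = u := by
    simp only [smul_eq_mul, mul_zero, zero_add]; field_simp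
  rw [hcomb, hfη, smul_eq_mul, smul_eq_mul] at key
  calc f u ≤ (η - u) / η * f 0 + u / η * 0 := key
    _ = f 0 / η * (η - u) := by ring

noncomputable def firstPosZero (f : ℝ → ℝ) : ℝ := sInf {u | 0 < u ∧ f u = 0}

section FirstPosZero

variable {f : ℝ → ℝ}

lemma bddBelow_posZeros : BddBelow {u | 0 < u ∧ f u = 0} :=
  ⟨0, fun _ hu => hu.1.le⟩

lemma firstPosZero_le_one (hf1 : f 1 = 0) : firstPosZero f ≤ 1 :=
  csInf_le bddBelow_posZeros ⟨one_pos, hf1⟩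

/-- Zeros beyond `1` are clipped to `1`, itself a zero, so the infimum is a limit of zeros in
`[0, 1]`, where `f` is continuous. -/
lemma firstPosZero_mem (hf : ContinuousOn f (Icc 0 1)) (hf1 : f 1 = 0) :
    firstPosZero f ∈ Icc 0 1 ∩ f ⁻¹' {0} := by
  have hclosed : IsClosed (Icc 0 1 ∩ f ⁻¹' {0}) :=
    hf.preimage_isClosed_of_isClosed isClosed_Icc isClosed_singleton
  have hclip : MapsTo (fun u => min u 1) {u | 0 < u ∧ f u = 0} (Icc 0 1 ∩ f ⁻¹' {0}) := by
    intro u hu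
    rcases le_total u 1 with h | h
    · simpa [min_eq_left h] using ⟨⟨hu.1.le, h⟩, hu.2⟩
    · simpa [min_eq_right h] using hf1
  have hmem : firstPosZero f ∈ closure {u | 0 < u ∧ f u = 0} :=
    csInf_mem_closure ⟨1, one_pos, hf1⟩ bddBelow_posZeros
  have := map_mem_closure (continuous_id.min continuous_const) hmem hclip
  rwa [hclosed.closure_eq, id, min_eq_left (firstPosZero_le_one hf1)] at this

lemma firstPosZero_pos (hf : ContinuousOn f (Icc 0 1)) (hf0 : 0 < f 0) (hf1 : f 1 = 0) :
    0 < firstPosZero f := by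
  obtain ⟨⟨hnonneg, -⟩, hzero⟩ := firstPosZero_mem hf hf1
  refine hnonneg.lt_of_ne fun h => hf0.ne' ?_
  rwa [← h, mem_preimage, mem_singleton_iff] at hzero

lemma pos_of_mem_Ico_firstPosZero (hf : ContinuousOn f (Icc 0 1)) (hf0 : 0 < f 0)
    (hf1 : f 1 = 0) {v : ℝ} (hv : v ∈ Ico 0 (firstPosZero f)) : 0 < f v := by
  by_contra! hfv
  have hv1 : v ≤ 1 := hv.2.le.trans (firstPosZero_le_one hf1)
  obtain ⟨w, hw, hfw⟩ := intermediate_value_Icc' hv.1 (hf.mono (Icc_subset_Icc_right hv1))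
    ⟨hfv, hf0.le⟩
  have hw_pos : 0 < w := hw.1.lt_of_ne fun h => hf0.ne' (h ▸ hfw)
  exact (csInf_le bddBelow_posZeros ⟨hw_pos, hfw⟩).not_gt (hw.2.trans_lt hv.2)

end FirstPosZero

lemma lintegral_inv_sub_eq_top {η : ℝ} (hη : 0 < η) :
    ∫⁻ u in Ioo 0 η, ENNReal.ofReal (η - u)⁻¹ = ∞ := by
  by_contra hfin
  have hint : IntegrableOn (fun u => (η - u)⁻¹) (Ioo 0 η) := by
    refine (lintegral_ofReal_ne_top_iff_integrable ?_ ?_).1 hfin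
    · exact ((continuous_const.sub continuous_id).continuousOn.inv₀ fun u hu =>
        (sub_pos.2 hu.2).ne').aestronglyMeasurable measurableSet_Ioo
    · exact (ae_restrict_iff' measurableSet_Ioo).2 (.of_forall fun u hu =>
        inv_nonneg.2 (sub_pos.2 hu.2).le)
  have : IntervalIntegrable (fun u => (u - η)⁻¹) volume 0 η := by
    rw [intervalIntegrable_iff_integrableOn_Ioo_of_le hη.le]
    refine hint.neg.congr_fun (fun u _ => ?_) measurableSet_Ioo
    rw [Pi.neg_apply, ← inv_neg, neg_sub]
  rw [intervalIntegrable_sub_inv_iff] at this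
  exact this.elim hη.ne fun h => h right_mem_uIcc

lemma lintegral_inv_eq_top_of_le_mul_sub {Φ : ℝ → ℝ} {η c : ℝ} (hη : 0 < η) (hc : 0 < c)
    (hΦ : ∀ u ∈ Ioo 0 η, 0 < Φ u ∧ Φ u ≤ c * (η - u)) :
    ∫⁻ u in Ioo 0 η, ENNReal.ofReal (1 / Φ u) = ∞ := by
  refine top_unique ?_
  calc ∞ = ENNReal.ofReal c⁻¹ * ∫⁻ u in Ioo 0 η, ENNReal.ofReal (η - u)⁻¹ := by
        rw [lintegral_inv_sub_eq_top hη, ENNReal.mul_top (by simpa using hc)]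
    _ = ∫⁻ u in Ioo 0 η, ENNReal.ofReal (1 / (c * (η - u))) := by
        rw [← lintegral_const_mul' _ _ ENNReal.ofReal_ne_top]
        refine setLIntegral_congr_fun measurableSet_Ioo fun u hu => ?_
        rw [← ENNReal.ofReal_mul (inv_nonneg.2 hc.le), one_div, mul_inv]
    _ ≤ ∫⁻ u in Ioo 0 η, ENNReal.ofReal (1 / Φ u) :=
        setLIntegral_mono' measurableSet_Ioo fun u hu =>
          ENNReal.ofReal_le_ofReal (one_div_le_one_div_of_le (hΦ u hu).1 (hΦ u hu).2)

section Primitive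

variable {g : ℝ → ℝ} {η : ℝ}

lemma intervalIntegrable_zero_of_mem_Ico (hg : ContinuousOn g (Ico 0 η)) {t : ℝ}
    (ht : t ∈ Ico 0 η) : IntervalIntegrable g volume 0 t :=
  (hg.mono (Icc_subset_Ico_right ht.2)).intervalIntegrable_of_Icc ht.1

lemma strictMonoOn_primitive (hg : ContinuousOn g (Ico 0 η)) (hg_pos : ∀ u ∈ Ico 0 η, 0 < g u) :
    StrictMonoOn (fun t => ∫ u in 0..t, g u) (Ico 0 η) := by
  intro s hs t ht hst
  have hs_int := intervalIntegrable_zero_of_mem_Ico hg hs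
  have ht_int := intervalIntegrable_zero_of_mem_Ico hg ht
  have hpos : 0 < ∫ u in s..t, g u :=
    intervalIntegral.intervalIntegral_pos_of_pos_on (hs_int.symm.trans ht_int)
      (fun u hu => hg_pos u ⟨hs.1.trans hu.1.le, hu.2.trans ht.2⟩) hst
  rw [← intervalIntegral.integral_interval_sub_left ht_int hs_int] at hpos
  exact sub_pos.1 hpos

lemma ofReal_primitive_eq_lintegral (hg : ContinuousOn g (Ico 0 η))
    (hg_pos : ∀ u ∈ Ico 0 η, 0 < g u) {t : ℝ} (ht : t ∈ Ico 0 η) :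
    ENNReal.ofReal (∫ u in 0..t, g u) = ∫⁻ u in Ioo 0 t, ENNReal.ofReal (g u) := by
  rw [intervalIntegral.integral_of_le ht.1, integral_Ioc_eq_integral_Ioo]
  refine ofReal_integral_eq_lintegral_ofReal
    ((intervalIntegrable_zero_of_mem_Ico hg ht).1.mono_set Ioo_subset_Ioc_self) ?_
  exact (ae_restrict_iff' measurableSet_Ioo).2 (.of_forall fun u hu =>
    (hg_pos u ⟨hu.1.le, hu.2.trans ht.2⟩).le)

lemma exists_lt_primitive (hη : 0 < η) (hg : ContinuousOn g (Ico 0 η))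
    (hg_pos : ∀ u ∈ Ico 0 η, 0 < g u) (htop : ∫⁻ u in Ioo 0 η, ENNReal.ofReal (g u) = ∞)
    (y : ℝ) : ∃ t ∈ Ioo 0 η, y < ∫ u in 0..t, g u := by
  have hcover : AECover (volume.restrict (Ioo 0 η)) (𝓝[<] η) fun t => Ioo 0 t :=
    aecover_Ioo_of_Ioo tendsto_const_nhds (tendsto_id.mono_left nhdsWithin_le_nhds)
  have hmeas : AEMeasurable (fun u => ENNReal.ofReal (g u)) (volume.restrict (Ioo 0 η)) :=
    ((hg.mono Ioo_subset_Ico_self).aemeasurable measurableSet_Ioo).ennreal_ofReal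
  have hlim := hcover.lintegral_tendsto_of_countably_generated hmeas
  rw [htop] at hlim
  obtain ⟨t, hy, ht⟩ := ((hlim.eventually (lt_mem_nhds ENNReal.ofReal_lt_top)).and
    (Ioo_mem_nhdsLT hη)).exists
  refine ⟨t, ht, ?_⟩
  rw [Measure.restrict_restrict measurableSet_Ioo, inter_eq_left.2 (Ioo_subset_Ioo_right ht.2.le),
    ← ofReal_primitive_eq_lintegral hg hg_pos ⟨ht.1.le, ht.2⟩] at hy
  exact (ENNReal.ofReal_lt_ofReal_iff'.1 hy).1

lemma bijOn_primitive (hη : 0 < η) (hg : ContinuousOn g (Ico 0 η))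
    (hg_pos : ∀ u ∈ Ico 0 η, 0 < g u) (htop : ∫⁻ u in Ioo 0 η, ENNReal.ofReal (g u) = ∞) :
    BijOn (fun t => ∫ u in 0..t, g u) (Ioo 0 η) (Ioi 0) := by
  have hmono := strictMonoOn_primitive hg hg_pos
  have h0 : (0 : ℝ) ∈ Ico 0 η := ⟨le_rfl, hη⟩
  refine ⟨fun t ht => ?_, (hmono.mono Ioo_subset_Ico_self).injOn, fun y hy => ?_⟩
  · simpa using hmono h0 (Ioo_subset_Ico_self ht) ht.1
  · obtain ⟨b, hb, hyb⟩ := exists_lt_primitive hη hg hg_pos htop y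
    have hcont : ContinuousOn (fun t => ∫ u in 0..t, g u) (Icc 0 b) := by
      simpa [uIcc_of_le hb.1.le] using intervalIntegral.continuousOn_primitive_interval'
        (intervalIntegrable_zero_of_mem_Ico hg ⟨hb.1.le, hb.2⟩) left_mem_uIcc
    obtain ⟨t, ht, rfl⟩ := intermediate_value_Ioo hb.1.le hcont ⟨by simpa using hy, hyb⟩
    exact ⟨t, ⟨ht.1, ht.2.trans hb.2⟩, rfl⟩

end Primitive

lemma summable_toReal_measure_singleton {α : Type*} [MeasurableSpace α]
    [MeasurableSingletonClass α] (μ : Measure α) [IsFiniteMeasure μ] :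
    Summable fun x : α => (μ {x}).toReal := by
  refine ENNReal.summable_toReal (ne_top_of_le_ne_top (measure_ne_top μ univ) ?_)
  exact tsum_measure_le_measure_univ (fun _ => (measurableSet_singleton _).nullMeasurableSet)
    fun _ _ hxy => (disjoint_singleton.2 hxy).aedisjoint

theorem coalescence_stmt0_general (μ : Measure ℕ) [IsFiniteMeasure μ]
    (h0 : 0 < μ {0}) :
    let Φ : ℝ → ℝ := fun s => ∑' n : ℕ, (s ^ n - s) * (μ {n}).toReal
    let η : ℝ := sInf {u : ℝ | 0 < u ∧ Φ u = 0}
    let F : ℝ → ℝ := fun t => ∫ u in (0:ℝ)..t, 1 / Φ u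
    0 < η ∧ η ≤ 1 ∧ (∀ u ∈ Ico (0:ℝ) η, 0 < Φ u) ∧
      (∫⁻ u in Ioo (0:ℝ) η, ENNReal.ofReal (1 / Φ u) = ⊤) ∧
      StrictMonoOn F (Ioo 0 η) ∧ BijOn F (Ioo 0 η) (Ioi 0) := by
  intro Φ η F
  have ha : 0 ≤ fun n : ℕ => (μ {n}).toReal := fun _ => ENNReal.toReal_nonneg
  have hsa := summable_toReal_measure_singleton μ
  have hΦ0 : 0 < Φ 0 := by
    rw [show Φ 0 = _ from phi_zero]
    exact ENNReal.toReal_pos h0.ne' (measure_ne_top μ _)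
  have hΦ : ContinuousOn Φ (Icc 0 1) := continuousOn_phi ha hsa
  have hΦ1 : Φ 1 = 0 := phi_one
  have hη_pos : 0 < η := firstPosZero_pos hΦ hΦ0 hΦ1
  have hpos : ∀ u ∈ Ico 0 η, 0 < Φ u := fun u => pos_of_mem_Ico_firstPosZero hΦ hΦ0 hΦ1
  obtain ⟨hη_mem, hΦη⟩ := firstPosZero_mem hΦ hΦ1
  have hchord (u : ℝ) (hu : u ∈ Icc 0 η) : Φ u ≤ Φ 0 / η * (η - u) :=
    (convexOn_phi ha hsa).le_chord_to_zero ⟨le_rfl, zero_le_one⟩ hη_mem hη_pos hΦη hu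
  have htop : ∫⁻ u in Ioo 0 η, ENNReal.ofReal (1 / Φ u) = ⊤ :=
    lintegral_inv_eq_top_of_le_mul_sub hη_pos (div_pos hΦ0 hη_pos) fun u hu =>
      ⟨hpos u (Ioo_subset_Ico_self hu), hchord u (Ioo_subset_Icc_self hu)⟩
  have hg : ContinuousOn (fun u => 1 / Φ u) (Ico 0 η) :=
    continuousOn_const.div (hΦ.mono fun u hu => ⟨hu.1, hu.2.le.trans hη_mem.2⟩)
      fun u hu => (hpos u hu).ne'
  have hg_pos : ∀ u ∈ Ico 0 η, 0 < 1 / Φ u := fun u hu => one_div_pos.2 (hpos u hu)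
  exact ⟨hη_pos, hη_mem.2, hpos, htop, (strictMonoOn_primitive hg hg_pos).mono
    Ioo_subset_Ico_self, bijOn_primitive hη_pos hg hg_pos htop⟩

/-- For a finite measure μ on ℕ with μ{1} = 0, μ{0} > 0 and finite first
moment, the function Φ(s) = Σ (s^n − s) μ{n} satisfies: 0 < η ≤ 1 where
η = inf{u > 0 : Φ(u) = 0}, Φ > 0 on [0,η), ∫_0^η du/Φ(u) = ∞, and
F(t) = ∫_0^t du/Φ(u) is a strictly increasing bijection from (0,η) onto (0,∞). -/
theorem coalescence_stmt0 (μ : Measure ℕ) [IsFiniteMeasure μ]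
    (h1 : μ {1} = 0) (h0 : 0 < μ {0})
    (hmom : Summable fun n : ℕ => (n : ℝ) * (μ {n}).toReal) :
    let Φ : ℝ → ℝ := fun s => ∑' n : ℕ, (s ^ n - s) * (μ {n}).toReal
    let η : ℝ := sInf {u : ℝ | 0 < u ∧ Φ u = 0}
    let F : ℝ → ℝ := fun t => ∫ u in (0:ℝ)..t, 1 / Φ u
    0 < η ∧ η ≤ 1 ∧ (∀ u ∈ Ico (0:ℝ) η, 0 < Φ u) ∧
      (∫⁻ u in Ioo (0:ℝ) η, ENNReal.ofReal (1 / Φ u) = ⊤) ∧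
      StrictMonoOn F (Ioo 0 η) ∧ BijOn F (Ioo 0 η) (Ioi 0) :=
  coalescence_stmt0_general μ h0
end

section
/- Let μ be a finite measure on ℕ with μ({1}) = 0 and μ({0}) > 0, and suppose Σ_{n≥0} n·μ({n}) < ∞. Define Φ(s) = Σ_{n≥0} (s^n − s)·μ({n}), η = inf{u > 0 : Φ(u) = 0}, F(t) = ∫_0^t du/Φ(u) on [0,η), and let φ : [0,∞) → [0,η) be the inverse of F. Then for every s ∈ [0,1] with s < η, the function v(t) := φ(t + F(s)) satisfies v(0) = s, v(t) − ∫_0^t Φ(v(u)) du = s for all t ≥ 0, and ∫_s^{v(t)} dw/Φ(w) = t for all t ≥ 0. -/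
open MeasureTheory Set Filter Topology

/-- Auxiliary: the generating-type function `Φ` is continuous on `[0,1]`. -/
lemma coalescence_aux_cont (c : ℕ → ℝ) (hc : ∀ n, 0 ≤ c n) (hsum : Summable c) :
    ContinuousOn (fun x : ℝ => ∑' n : ℕ, (x ^ n - x) * c n) (Icc 0 1) := by
  set cl : ℝ → ℝ := fun x => max 0 (min x 1) with hcl
  have hclcont : Continuous cl := continuous_const.max (continuous_id.min continuous_const)
  have hclmem : ∀ x : ℝ, cl x ∈ Icc (0:ℝ) 1 := fun x =>
    ⟨le_max_left _ _, max_le (by norm_num) (min_le_right _ _)⟩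
  have hg : Continuous fun x : ℝ => ∑' n : ℕ, ((cl x) ^ n - cl x) * c n := by
    apply continuous_tsum (u := fun n => 2 * c n)
    · intro n
      exact (((hclcont.pow n).sub hclcont).mul continuous_const)
    · exact hsum.mul_left 2
    · intro n x
      have h1 : |cl x ^ n - cl x| ≤ 2 := by
        have h0 : (0:ℝ) ≤ cl x := (hclmem x).1
        have h1' : cl x ≤ 1 := (hclmem x).2
        have hp0 : (0:ℝ) ≤ cl x ^ n := pow_nonneg h0 n
        have hp1 : cl x ^ n ≤ 1 := pow_le_one₀ h0 h1'
        rw [abs_le]; constructor <;> nlinarith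
      have : ‖(cl x ^ n - cl x) * c n‖ = |cl x ^ n - cl x| * c n := by
        rw [norm_mul, Real.norm_eq_abs, Real.norm_eq_abs, abs_of_nonneg (hc n)]
      rw [this]
      exact mul_le_mul_of_nonneg_right h1 (hc n)
  apply (hg.continuousOn).congr
  intro x hx
  have : cl x = x := by
    simp only [hcl]
    rw [min_eq_left hx.2, max_eq_right hx.1]
  simp [this]

/-- With Φ, η, F as before and φ : [0,∞) → [0,η) the inverse of F,
for every s ∈ [0,1] with s < η, the function v(t) = φ(t + F(s)) satisfies
v(0) = s, v(t) − ∫_0^t Φ(v(u)) du = s, and ∫_s^{v(t)} dw/Φ(w) = t for all t ≥ 0. -/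
theorem coalescence_stmt1 (μ : Measure ℕ) [IsFiniteMeasure μ]
    (h1 : μ {1} = 0) (h0 : 0 < μ {0})
    (hmom : Summable fun n : ℕ => (n : ℝ) * (μ {n}).toReal)
    (Φ : ℝ → ℝ) (hΦ : ∀ s, Φ s = ∑' n : ℕ, (s ^ n - s) * (μ {n}).toReal)
    (η : ℝ) (hη : η = sInf {u : ℝ | 0 < u ∧ Φ u = 0})
    (F : ℝ → ℝ) (hF : ∀ t, F t = ∫ u in (0:ℝ)..t, 1 / Φ u)
    (φ : ℝ → ℝ)
    (hφ₁ : ∀ t ∈ Ico (0:ℝ) η, φ (F t) = t)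
    (hφ₂ : ∀ y : ℝ, 0 ≤ y → φ y ∈ Ico (0:ℝ) η ∧ F (φ y) = y)
    (s : ℝ) (hs : s ∈ Icc (0:ℝ) 1) (hsη : s < η) :
    let v : ℝ → ℝ := fun t => φ (t + F s)
    v 0 = s ∧
      (∀ t ≥ (0:ℝ), v t - ∫ u in (0:ℝ)..t, Φ (v u) = s) ∧
      (∀ t ≥ (0:ℝ), ∫ w in s..(v t), 1 / Φ w = t) := by
  intro v
  -- basic facts about the coefficients
  set c : ℕ → ℝ := fun n => (μ {n}).toReal with hc
  have hcnn : ∀ n, 0 ≤ c n := fun n => ENNReal.toReal_nonneg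
  have hcsum : Summable c := by
    rw [← summable_nat_add_iff 1]
    have hshift : Summable (fun n : ℕ => ((n:ℝ) + 1) * c (n + 1)) := by
      have := (summable_nat_add_iff (f := fun n : ℕ => (n : ℝ) * c n) 1).2 hmom
      simpa [hc] using this
    apply Summable.of_nonneg_of_le (fun n => hcnn (n+1)) _ hshift
    intro n
    have h1' : (1:ℝ) ≤ (n:ℝ) + 1 := le_add_of_nonneg_left (Nat.cast_nonneg n)
    nlinarith [hcnn (n+1)]
  -- continuity of Φ on [0,1]
  have hΦeq : ∀ x, Φ x = ∑' n : ℕ, (x ^ n - x) * c n := hΦ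
  have hΦcont : ContinuousOn Φ (Icc 0 1) := by
    have := coalescence_aux_cont c hcnn hcsum
    exact this.congr fun x _ => hΦeq x
  -- Φ 0 > 0, Φ 1 = 0
  have hΦ0 : Φ 0 = c 0 := by
    rw [hΦeq]
    rw [tsum_eq_single 0]
    · norm_num
    · intro n hn
      simp [zero_pow hn]
  have hΦ0pos : 0 < Φ 0 := by
    rw [hΦ0]
    exact ENNReal.toReal_pos h0.ne' (measure_ne_top μ _)
  have hΦ1 : Φ 1 = 0 := by
    rw [hΦeq]; simp
  -- η ≤ 1
  have hbdd : BddBelow {u : ℝ | 0 < u ∧ Φ u = 0} :=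
    ⟨0, fun u hu => hu.1.le⟩
  have hone : (1:ℝ) ∈ {u : ℝ | 0 < u ∧ Φ u = 0} := ⟨one_pos, hΦ1⟩
  have hη1 : η ≤ 1 := hη ▸ csInf_le hbdd hone
  -- positivity of Φ on [0, η)
  have hpos : ∀ x ∈ Ico (0:ℝ) η, 0 < Φ x := by
    rintro x ⟨hx0, hxη⟩
    rcases eq_or_lt_of_le hx0 with h | h
    · rwa [← h]
    by_contra hle
    push_neg at hle
    have hx1 : x ≤ 1 := le_trans hxη.le hη1
    have hIcc : Icc (0:ℝ) x ⊆ Icc (0:ℝ) 1 := Icc_subset_Icc le_rfl hx1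
    have hivt := intermediate_value_Icc' hx0 (hΦcont.mono hIcc)
    have h0mem : (0:ℝ) ∈ Icc (Φ x) (Φ 0) := ⟨hle, hΦ0pos.le⟩
    obtain ⟨z, hz, hΦz⟩ := hivt h0mem
    have hz0 : 0 < z := by
      rcases eq_or_lt_of_le hz.1 with h' | h'
      · exfalso; rw [← h'] at hΦz; linarith
      · exact h'
    have : η ≤ z := hη ▸ csInf_le hbdd ⟨hz0, hΦz⟩
    linarith [hz.2]
  -- continuity of 1/Φ on [0,η)
  have hIcoSub : Ico (0:ℝ) η ⊆ Icc 0 1 := fun x hx => ⟨hx.1, le_trans hx.2.le hη1⟩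
  have hinvcont : ContinuousOn (fun u => 1 / Φ u) (Ico (0:ℝ) η) := by
    apply ContinuousOn.div continuousOn_const (hΦcont.mono hIcoSub)
    intro x hx; exact (hpos x hx).ne'
  -- interval integrability of 1/Φ on [a,b] ⊆ [0,η)
  have hints : ∀ a b : ℝ, 0 ≤ a → a ≤ b → b < η →
      IntervalIntegrable (fun u => 1 / Φ u) volume a b := by
    intro a b ha hab hbη
    apply ContinuousOn.intervalIntegrable
    apply hinvcont.mono
    rw [uIcc_of_le hab]
    exact fun x hx => ⟨le_trans ha hx.1, lt_of_le_of_lt hx.2 hbη⟩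
  -- F differences
  have hFdiff : ∀ a b : ℝ, 0 ≤ a → a ≤ b → b < η →
      F b - F a = ∫ u in a..b, 1 / Φ u := by
    intro a b ha hab hbη
    rw [hF a, hF b]
    exact intervalIntegral.integral_interval_sub_left
      (hints 0 b le_rfl (le_trans ha hab) hbη) (hints 0 a le_rfl ha (lt_of_le_of_lt hab hbη))
  -- F is monotone / strictly monotone on [0,η)
  have hFmono : ∀ a b : ℝ, 0 ≤ a → a ≤ b → b < η → F a ≤ F b := by
    intro a b ha hab hbη
    have := hFdiff a b ha hab hbη
    have hnn : 0 ≤ ∫ u in a..b, 1 / Φ u := by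
      apply intervalIntegral.integral_nonneg hab
      intro u hu
      have hmem : u ∈ Ico (0:ℝ) η := ⟨le_trans ha hu.1, lt_of_le_of_lt hu.2 hbη⟩
      have hp := hpos u hmem
      positivity
    linarith
  have hFstrict : ∀ a b : ℝ, 0 ≤ a → a < b → b < η → F a < F b := by
    intro a b ha hab hbη
    have hd := hFdiff a b ha hab.le hbη
    have hpos' : 0 < ∫ u in a..b, 1 / Φ u := by
      apply intervalIntegral.intervalIntegral_pos_of_pos_on
        (hints a b ha hab.le hbη) _ hab
      intro u hu
      have : u ∈ Ico (0:ℝ) η := ⟨le_trans ha hu.1.le, lt_trans hu.2 hbη⟩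
      have := hpos u this
      positivity
    linarith
  have hF0 : F 0 = 0 := by rw [hF]; simp
  have hFs0 : 0 ≤ F s := by
    rw [← hF0]; exact hFmono 0 s le_rfl hs.1 hsη
  -- basic facts about v
  have hv0 : v 0 = s := by
    show φ (0 + F s) = s
    rw [zero_add]
    exact hφ₁ s ⟨hs.1, hsη⟩
  have hvmem : ∀ t, 0 ≤ t → v t ∈ Ico (0:ℝ) η := fun t ht =>
    (hφ₂ (t + F s) (by linarith)).1
  have hvF : ∀ t, 0 ≤ t → F (v t) = t + F s := fun t ht =>
    (hφ₂ (t + F s) (by linarith)).2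
  have hvges : ∀ t, 0 ≤ t → s ≤ v t := by
    intro t ht
    by_contra hlt
    push_neg at hlt
    have := hFstrict (v t) s (hvmem t ht).1 hlt hsη
    rw [hvF t ht] at this
    linarith
  have hvgts : ∀ t, 0 < t → s < v t := by
    intro t ht
    rcases eq_or_lt_of_le (hvges t ht.le) with h | h
    · exfalso
      have := hvF t ht.le
      rw [← h] at this
      linarith
    · exact h
  -- v is strictly monotone on [0,∞)
  have hvmono : StrictMonoOn v (Ici (0:ℝ)) := by
    intro a ha b hb hab
    by_contra hle
    push_neg at hle
    have h1' := hFmono (v b) (v a) (hvmem b hb).1 hle (hvmem a ha).2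
    rw [hvF a ha, hvF b hb] at h1'
    linarith
  -- surjectivity helper: every r ∈ [s, η) is attained by v
  have hvsurj : ∀ r, s ≤ r → r < η → ∃ ctime, 0 ≤ ctime ∧ v ctime = r := by
    intro r hsr hrη
    refine ⟨F r - F s, by linarith [hFmono s r hs.1 hsr hrη], ?_⟩
    show φ (F r - F s + F s) = r
    rw [sub_add_cancel]
    exact hφ₁ r ⟨le_trans hs.1 hsr, hrη⟩
  -- continuity of v
  have hvcontWithin : ContinuousWithinAt v (Ici 0) 0 := by
    apply StrictMonoOn.continuousWithinAt_right_of_exists_between hvmono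
      (self_mem_nhdsWithin)
    intro b hb
    rw [hv0] at hb ⊢
    set r := min b ((s + η) / 2) with hr
    have hrs : s < r := lt_min hb (by linarith)
    have hrη : r < η := lt_of_le_of_lt (min_le_right _ _) (by linarith)
    obtain ⟨ct, hct0, hctr⟩ := hvsurj r hrs.le hrη
    exact ⟨ct, hct0, by rw [hctr]; exact ⟨hrs, min_le_left _ _⟩⟩
  have hvcontAt : ∀ x : ℝ, 0 < x → ContinuousAt v x := by
    intro x hx
    apply StrictMonoOn.continuousAt_of_exists_between hvmono
      (Ici_mem_nhds hx)
    · -- left: ∀ b < v x, ∃ c ∈ Ici 0, v c ∈ Ico b (v x)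
      intro b hb
      set r := max b ((s + v x) / 2) with hr
      have hsvx : s < v x := hvgts x hx
      have hrs : s ≤ r := le_trans (by linarith) (le_max_right _ _)
      have hrvx : r < v x := max_lt hb (by linarith)
      obtain ⟨ct, hct0, hctr⟩ := hvsurj r hrs (lt_trans hrvx (hvmem x hx.le).2)
      exact ⟨ct, hct0, by rw [hctr]; exact ⟨le_max_left _ _, hrvx⟩⟩
    · -- right: ∀ b > v x, ∃ c ∈ Ici 0, v c ∈ Ioc (v x) b
      intro b hb
      set r := min b ((v x + η) / 2) with hr
      have hvxη : v x < η := (hvmem x hx.le).2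
      have hrvx : v x < r := lt_min hb (by linarith)
      have hrη : r < η := lt_of_le_of_lt (min_le_right _ _) (by linarith)
      obtain ⟨ct, hct0, hctr⟩ :=
        hvsurj r (le_trans (hvges x hx.le) hrvx.le) hrη
      exact ⟨ct, hct0, by rw [hctr]; exact ⟨hrvx, min_le_left _ _⟩⟩
  have hvcontOn : ∀ T : ℝ, 0 ≤ T → ContinuousOn v (Icc 0 T) := by
    intro T hT x hx
    rcases eq_or_lt_of_le hx.1 with h | h
    · rw [← h]
      exact (hvcontWithin.mono (fun y hy => hy.1))
    · exact (hvcontAt x h).continuousWithinAt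
  -- derivative of v on (0,∞)
  have hvderiv : ∀ x : ℝ, 0 < x → HasDerivAt v (Φ (v x)) x := by
    intro x hx
    have hvx0 : 0 < v x := lt_of_le_of_lt hs.1 (hvgts x hx)
    have hvxη : v x < η := (hvmem x hx.le).2
    have hΦvx : 0 < Φ (v x) := hpos (v x) ⟨hvx0.le, hvxη⟩
    -- F has derivative (Φ (v x))⁻¹ at v x
    have hFfun : F = fun u => ∫ w in (0:ℝ)..u, 1 / Φ w := funext hF
    have hopen : IsOpen (Ioo (0:ℝ) η) := isOpen_Ioo
    have hmemIoo : v x ∈ Ioo (0:ℝ) η := ⟨hvx0, hvxη⟩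
    have hcontIoo : ContinuousOn (fun u => 1 / Φ u) (Ioo (0:ℝ) η) :=
      hinvcont.mono Ioo_subset_Ico_self
    have hca : ContinuousAt (fun u => 1 / Φ u) (v x) :=
      hcontIoo.continuousAt (hopen.mem_nhds hmemIoo)
    have hFderiv : HasDerivAt F (1 / Φ (v x)) (v x) := by
      rw [hFfun]
      exact intervalIntegral.integral_hasDerivAt_right
        (hints 0 (v x) le_rfl hvx0.le hvxη)
        (hcontIoo.stronglyMeasurableAtFilter hopen (v x) hmemIoo)
        hca
    have hGderiv : HasDerivAt (fun u => F u - F s) ((Φ (v x))⁻¹) (v x) := by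
      have := hFderiv.sub_const (F s)
      simpa [one_div] using this
    have hfg : ∀ᶠ y in 𝓝 x, (fun u => F u - F s) (v y) = y := by
      filter_upwards [Ioi_mem_nhds hx] with y hy
      have hy0 : (0:ℝ) ≤ y := le_of_lt hy
      show F (v y) - F s = y
      rw [hvF y hy0]
      ring
    have := HasDerivAt.of_local_left_inverse (hvcontAt x hx) hGderiv
      (by positivity) hfg
    simpa using this
  -- integrability of Φ ∘ v on [0,T]
  have hΦvint : ∀ T : ℝ, 0 ≤ T → IntervalIntegrable (fun u => Φ (v u)) volume 0 T := by
    intro T hT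
    apply ContinuousOn.intervalIntegrable
    rw [uIcc_of_le hT]
    apply hΦcont.comp (hvcontOn T hT)
    intro u hu
    exact hIcoSub (hvmem u hu.1)
  refine ⟨hv0, ?_, ?_⟩
  · -- second claim
    intro t ht
    have := intervalIntegral.integral_eq_sub_of_hasDerivAt_of_le ht
      (hvcontOn t ht) (fun x hx => hvderiv x hx.1) (hΦvint t ht)
    rw [this, hv0]
    ring
  · -- third claim
    intro t ht
    have hvt := hvmem t ht
    have hd := hFdiff s (v t) hs.1 (hvges t ht) hvt.2
    rw [hvF t ht] at hd
    rw [← hd]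
    ring
end

section
/- Let (ψ_t)_{t>0} be a family of convex functions ψ_t : [0,1] → [0,1] with ψ_t(1) = 1, ψ_t(s) < 1 for s ∈ [0,1), each having a finite left derivative ψ_t'(1) > 0 at 1, satisfying the semigroup property ψ_{t+h} = ψ_t ∘ ψ_h and the multiplicativity ψ_{t+h}'(1) = ψ_t'(1)·ψ_h'(1) for all t, h > 0. Then for each fixed s ∈ [0,1), the map t ↦ (1 − ψ_t(s)) / ((1 − s)·ψ_t'(1)) is monotone decreasing on (0,∞); in particular the limit χ(s) := lim_{t→∞} (1 − ψ_t(s)) / ((1 − s)·ψ_t'(1)) exists and is ≥ 0. -/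
open Set Filter Topology

/-- For a composition semigroup (ψ_t)_{t>0} of convex functions on [0,1]
fixing 1, with ψ_t < 1 on [0,1), positive finite left derivatives d t = ψ_t'(1) at 1
that are multiplicative in t, the map t ↦ (1 − ψ_t(s))/((1 − s)·ψ_t'(1)) is monotone
decreasing on (0,∞) for each fixed s ∈ [0,1), and its limit χ(s) as t → ∞ exists and
is ≥ 0. -/
theorem coalescence_stmt7 (ψ : ℝ → ℝ → ℝ) (d : ℝ → ℝ)
    (hconv : ∀ t > 0, ConvexOn ℝ (Icc 0 1) (ψ t))
    (hmap : ∀ t > 0, MapsTo (ψ t) (Icc 0 1) (Icc 0 1))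
    (h1 : ∀ t > 0, ψ t 1 = 1)
    (hlt : ∀ t > 0, ∀ s ∈ Ico (0:ℝ) 1, ψ t s < 1)
    (hd : ∀ t > 0, HasDerivWithinAt (ψ t) (d t) (Iic 1) 1)
    (hd0 : ∀ t > 0, 0 < d t)
    (hsemi : ∀ t > 0, ∀ h > 0, ∀ s ∈ Icc (0:ℝ) 1, ψ (t + h) s = ψ t (ψ h s))
    (hdmul : ∀ t > 0, ∀ h > 0, d (t + h) = d t * d h) :
    ∀ s ∈ Ico (0:ℝ) 1,
      AntitoneOn (fun t => (1 - ψ t s) / ((1 - s) * d t)) (Ioi 0) ∧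
      ∃ χ : ℝ, 0 ≤ χ ∧
        Tendsto (fun t => (1 - ψ t s) / ((1 - s) * d t)) atTop (𝓝 χ) := by
  intro s hs
  obtain ⟨hs0, hs1⟩ := hs
  have hs1' : (0:ℝ) < 1 - s := by linarith
  set f : ℝ → ℝ := fun t => (1 - ψ t s) / ((1 - s) * d t) with hf
  -- key slope inequality
  have key : ∀ t > 0, ∀ u ∈ Ico (0:ℝ) 1, 1 - ψ t u ≤ d t * (1 - u) := by
    intro t ht u hu
    have hslope : slope (ψ t) u 1 ≤ d t := by
      apply (hconv t ht).slope_le_of_hasDerivWithinAt_Iio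
        (x := u) (y := 1) ⟨hu.1, hu.2.le⟩ (by norm_num) hu.2
      exact (hd t ht).mono Iio_subset_Iic_self
    rw [slope_def_field, h1 t ht] at hslope
    have h1u : (0:ℝ) < 1 - u := by linarith [hu.2]
    rw [div_le_iff₀ h1u] at hslope
    linarith
  -- nonnegativity
  have hnn : ∀ t > 0, 0 ≤ f t := by
    intro t ht
    apply div_nonneg
    · linarith [hlt t ht s ⟨hs0, hs1⟩]
    · exact mul_nonneg hs1'.le (hd0 t ht).le
  -- antitone on Ioi 0
  have hanti : AntitoneOn f (Ioi 0) := by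
    intro a ha b hb hab
    rcases eq_or_lt_of_le hab with rfl | hab
    · exact le_rfl
    · have ha' : (0:ℝ) < a := ha
      have hba : (0:ℝ) < b - a := by linarith
      set u := ψ a s with hu
      have hu01 : u ∈ Ico (0:ℝ) 1 :=
        ⟨(hmap a ha' ⟨hs0, hs1.le⟩).1, hlt a ha' s ⟨hs0, hs1⟩⟩
      have hb' : ψ b s = ψ (b - a) u := by
        have := hsemi (b - a) hba a ha' s ⟨hs0, hs1.le⟩
        rwa [sub_add_cancel] at this
      have hdb : d b = d (b - a) * d a := by
        have := hdmul (b - a) hba a ha'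
        rwa [sub_add_cancel] at this
      have hkey := key (b - a) hba u hu01
      have hda := hd0 a ha'
      have hdba := hd0 (b - a) hba
      have h1u : (0:ℝ) < 1 - u := by linarith [hu01.2]
      show (1 - ψ b s) / ((1 - s) * d b) ≤ (1 - ψ a s) / ((1 - s) * d a)
      rw [hb', hdb]
      rw [div_le_div_iff₀ (by positivity) (by positivity)]
      have : (1 - ψ (b - a) u) * ((1 - s) * d a)
          ≤ d (b - a) * (1 - u) * ((1 - s) * d a) := by
        apply mul_le_mul_of_nonneg_right hkey (by positivity)
      calc (1 - ψ (b - a) u) * ((1 - s) * d a)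
          ≤ d (b - a) * (1 - u) * ((1 - s) * d a) := this
        _ = (1 - u) * ((1 - s) * (d (b - a) * d a)) := by ring
  refine ⟨hanti, ?_⟩
  set g : ℝ → ℝ := fun t => f (max t 1) with hg
  have hganti : Antitone g := by
    intro a b hab
    exact hanti (by simp : max a 1 ∈ Ioi 0) (by simp : max b 1 ∈ Ioi 0)
      (max_le_max hab le_rfl)
  have hgnn : ∀ t, 0 ≤ g t := fun t => hnn _ (by simp)
  have hbdd : BddBelow (range g) := ⟨0, by rintro x ⟨t, rfl⟩; exact hgnn t⟩
  refine ⟨⨅ t, g t, le_ciInf hgnn, ?_⟩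
  have hlim : Tendsto g atTop (𝓝 (⨅ t, g t)) := tendsto_atTop_ciInf hganti hbdd
  apply hlim.congr'
  filter_upwards [eventually_ge_atTop (1:ℝ)] with t ht
  simp [hg, max_eq_left ht]
end

section
/- Let f : [0,1] → [0,1] be convex, monotone increasing and twice continuously differentiable, with f(1) = 1, f(0) > 0, and 0 < f'(1) < 1. Then f^∘n(0) < 1 for all n ≥ 0, and the limit lim_{n→∞} (1 − f^∘n(0)) / f'(1)^n exists, is finite, and is strictly positive. -/
open Set Filter Topology

/-!
Write `m = f'(1)` and `eₙ = 1 - f^∘n(0)`. Convexity gives `e_{n+1} ≤ m eₙ`, so `eₙ ≤ mⁿ`, and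
Taylor's formula at `1` gives `|e_{n+1} - m eₙ| ≤ C eₙ²` with `C = sup |f''|`. Hence the ratios
of consecutive terms of `aₙ = eₙ / mⁿ` are `1 + δₙ` with `|δₙ| ≤ (C / m) eₙ`, a summable
sequence; so `log aₙ` converges and `aₙ` tends to a positive limit.
-/

theorem exists_pos_tendsto_of_summable_div_sub_one {u : ℕ → ℝ} (hu : ∀ n, 0 < u n)
    (hs : Summable fun n => u (n + 1) / u n - 1) :
    ∃ L, 0 < L ∧ Tendsto u atTop (𝓝 L) := by
  have hlog : Summable fun n => Real.log (u (n + 1) / u n) := by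
    simpa using Real.summable_log_one_add_of_summable hs
  have htelescope : ∀ n, Real.log (u n) =
      Real.log (u 0) + ∑ i ∈ Finset.range n, Real.log (u (i + 1) / u i) := fun n => by
    rw [Finset.sum_congr rfl fun i _ => Real.log_div (hu (i + 1)).ne' (hu i).ne',
      Finset.sum_range_sub (fun i => Real.log (u i))]
    ring
  have hlim : Tendsto (fun n => Real.log (u n)) atTop
      (𝓝 (Real.log (u 0) + ∑' i, Real.log (u (i + 1) / u i))) :=
    (tendsto_const_nhds.add hlog.hasSum.tendsto_sum_nat).congr fun n => (htelescope n).symm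
  refine ⟨_, Real.exp_pos _, ((Real.continuous_exp.tendsto _).comp hlim).congr fun n => ?_⟩
  exact Real.exp_log (hu n)

theorem exists_pos_tendsto_div_pow {e : ℕ → ℝ} {m C : ℝ} (hm₀ : 0 < m) (hm₁ : m < 1)
    (he : ∀ n, 0 < e n) (hle : ∀ n, e (n + 1) ≤ m * e n)
    (hsq : ∀ n, |e (n + 1) - m * e n| ≤ C * e n ^ 2) :
    ∃ L, 0 < L ∧ Tendsto (fun n => e n / m ^ n) atTop (𝓝 L) := by
  refine exists_pos_tendsto_of_summable_div_sub_one (fun n => div_pos (he n) (pow_pos hm₀ n)) ?_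
  have hgeom : Summable fun n => C / m * e 0 * m ^ n :=
    (summable_geometric_of_lt_one hm₀.le hm₁).mul_left _
  refine hgeom.of_norm_bounded fun n => ?_
  have hen := he n
  have hratio : e (n + 1) / m ^ (n + 1) / (e n / m ^ n) - 1 =
      (e (n + 1) - m * e n) / (m * e n) := by
    field_simp
    ring
  have hC : 0 ≤ C := nonneg_of_mul_nonneg_left ((abs_nonneg _).trans (hsq 0)) (pow_pos (he 0) 2)
  calc ‖e (n + 1) / m ^ (n + 1) / (e n / m ^ n) - 1‖
      = |e (n + 1) - m * e n| / (m * e n) := by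
        rw [Real.norm_eq_abs, hratio, abs_div, abs_of_pos (show 0 < m * e n by positivity)]
    _ ≤ C * e n ^ 2 / (m * e n) := by gcongr; exact hsq n
    _ = C / m * e n := by field_simp
    _ ≤ C / m * (m ^ n * e 0) := by
        gcongr
        exact le_geom hm₀.le n fun k _ => hle k
    _ = C / m * e 0 * m ^ n := by ring

theorem MonotoneOn.lt_of_hasDerivWithinAt_right_ne_zero {f : ℝ → ℝ} {a b d x : ℝ}
    (hmono : MonotoneOn f (Icc a b)) (hd : HasDerivWithinAt f d (Icc a b) b) (hd₀ : d ≠ 0)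
    (hx : x ∈ Icc a b) (hxb : x < b) : f x < f b := by
  have hb : b ∈ Icc a b := right_mem_Icc.2 (hx.1.trans hxb.le)
  refine (hmono hx hb hxb.le).lt_of_ne fun hfx => hd₀ ?_
  have hsub : Icc x b ⊆ Icc a b := Icc_subset_Icc_left hx.1
  have hconst : ∀ y ∈ Icc x b, f y = f b := fun y hy =>
    le_antisymm (hmono (hsub hy) hb hy.2) (hfx ▸ hmono hx (hsub hy) hy.1)
  have hd_zero : HasDerivWithinAt f 0 (Icc x b) b :=
    (hasDerivWithinAt_const b _ (f b)).congr hconst rfl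
  exact (uniqueDiffOn_Icc hxb b (right_mem_Icc.2 hxb.le)).eq_deriv _ (hd.mono hsub) hd_zero

theorem ConvexOn.sub_le_mul_of_hasDerivWithinAt_right {f : ℝ → ℝ} {a b d x : ℝ}
    (hconv : ConvexOn ℝ (Icc a b) f) (hd : HasDerivWithinAt f d (Icc a b) b) (hx : x ∈ Icc a b) :
    f b - f x ≤ d * (b - x) := by
  rcases hx.2.eq_or_lt with rfl | hxb
  · simp
  have hslope :=
    hconv.slope_le_of_hasDerivWithinAt hx (right_mem_Icc.2 (hx.1.trans hxb.le)) hxb hd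
  rwa [slope_def_field, div_le_iff₀ (sub_pos.2 hxb)] at hslope

theorem abs_sub_sub_mul_le_of_abs_deriv2_le {f f' f'' : ℝ → ℝ} {a b C x : ℝ}
    (hf' : ∀ s ∈ Icc a b, HasDerivWithinAt f (f' s) (Icc a b) s)
    (hf'' : ∀ s ∈ Icc a b, HasDerivWithinAt f' (f'' s) (Icc a b) s)
    (hC : ∀ s ∈ Icc a b, |f'' s| ≤ C) (hx : x ∈ Icc a b) :
    |f b - f x - f' b * (b - x)| ≤ C * (b - x) ^ 2 := by
  have hb : b ∈ Icc a b := right_mem_Icc.2 (hx.1.trans hx.2)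
  have hsub : Icc x b ⊆ Icc a b := Icc_subset_Icc_left hx.1
  have hderiv_diff : ∀ s ∈ Icc x b, |f' s - f' b| ≤ C * (b - x) := fun s hs => by
    have := (convex_Icc a b).norm_image_sub_le_of_norm_hasDerivWithin_le hf'' hC (hsub hs) hb
    rw [Real.norm_eq_abs, abs_sub_comm, Real.norm_eq_abs,
      abs_of_nonneg (sub_nonneg.2 hs.2)] at this
    have hC₀ : 0 ≤ C := (abs_nonneg _).trans (hC x hx)
    exact this.trans (mul_le_mul_of_nonneg_left (by linarith [hs.1]) hC₀)
  have hg : ∀ s ∈ Icc x b,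
      HasDerivWithinAt (fun y => f y - f' b * y) (f' s - f' b) (Icc x b) s := fun s hs => by
    have h := ((hf' s (hsub hs)).mono hsub).sub ((hasDerivWithinAt_id s _).const_mul (f' b))
    rwa [mul_one] at h
  have := (convex_Icc x b).norm_image_sub_le_of_norm_hasDerivWithin_le hg hderiv_diff
    (left_mem_Icc.2 hx.2) (right_mem_Icc.2 hx.2)
  rw [Real.norm_eq_abs, Real.norm_eq_abs, abs_of_nonneg (sub_nonneg.2 hx.2)] at this
  calc |f b - f x - f' b * (b - x)| = |f b - f' b * b - (f x - f' b * x)| := by ring_nf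
    _ ≤ C * (b - x) ^ 2 := by rwa [sq, ← mul_assoc]

theorem coalescence_stmt10_general (f f' f'' : ℝ → ℝ)
    (hconv : ConvexOn ℝ (Icc 0 1) f)
    (hmono : MonotoneOn f (Icc 0 1))
    (hmap : MapsTo f (Icc 0 1) (Icc 0 1))
    (hf' : ∀ s ∈ Icc (0:ℝ) 1, HasDerivWithinAt f (f' s) (Icc 0 1) s)
    (hf'' : ∀ s ∈ Icc (0:ℝ) 1, HasDerivWithinAt f' (f'' s) (Icc 0 1) s)
    (hcont : ContinuousOn f'' (Icc 0 1))
    (hf1 : f 1 = 1)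
    (hd0 : 0 < f' 1) (hd1 : f' 1 < 1) :
    (∀ n : ℕ, f^[n] 0 < 1) ∧
      ∃ L : ℝ, 0 < L ∧
        Tendsto (fun n : ℕ => (1 - f^[n] 0) / (f' 1) ^ n) atTop (𝓝 L) := by
  have h1 : (1 : ℝ) ∈ Icc (0 : ℝ) 1 := right_mem_Icc.2 zero_le_one
  have hmem : ∀ n, f^[n] 0 ∈ Icc (0 : ℝ) 1 := fun n =>
    hmap.iterate n (left_mem_Icc.2 zero_le_one)
  have hlt : ∀ n, f^[n] 0 < 1 := by
    intro n
    induction n with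
    | zero => exact zero_lt_one
    | succ n ih =>
      rw [Function.iterate_succ_apply', ← hf1]
      exact hmono.lt_of_hasDerivWithinAt_right_ne_zero (hf' 1 h1) hd0.ne' (hmem n) ih
  refine ⟨hlt, ?_⟩
  obtain ⟨C, hC⟩ := isCompact_Icc.exists_bound_of_continuousOn hcont
  have hsucc : ∀ n, 1 - f^[n + 1] 0 = f 1 - f (f^[n] 0) := fun n => by
    rw [Function.iterate_succ_apply', hf1]
  refine exists_pos_tendsto_div_pow (C := C) hd0 hd1 (fun n => sub_pos.2 (hlt n))
    (fun n => ?_) (fun n => ?_)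
  · rw [hsucc]
    exact hconv.sub_le_mul_of_hasDerivWithinAt_right (hf' 1 h1) (hmem n)
  · rw [hsucc]
    exact abs_sub_sub_mul_le_of_abs_deriv2_le hf' hf'' hC (hmem n)

/-- For f : [0,1] → [0,1] convex, monotone increasing, twice
continuously differentiable on [0,1], with f(1) = 1, f(0) > 0 and 0 < f'(1) < 1,
all iterates satisfy f^∘n(0) < 1 and the limit lim_n (1 − f^∘n(0))/f'(1)^n exists,
is finite and strictly positive (Joffe's argument). -/
theorem coalescence_stmt10 (f f' f'' : ℝ → ℝ)
    (hconv : ConvexOn ℝ (Icc 0 1) f)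
    (hmono : MonotoneOn f (Icc 0 1))
    (hmap : MapsTo f (Icc 0 1) (Icc 0 1))
    (hf' : ∀ s ∈ Icc (0:ℝ) 1, HasDerivWithinAt f (f' s) (Icc 0 1) s)
    (hf'' : ∀ s ∈ Icc (0:ℝ) 1, HasDerivWithinAt f' (f'' s) (Icc 0 1) s)
    (hcont : ContinuousOn f'' (Icc 0 1))
    (hf1 : f 1 = 1) (hf0 : 0 < f 0)
    (hd0 : 0 < f' 1) (hd1 : f' 1 < 1) :
    (∀ n : ℕ, f^[n] 0 < 1) ∧
      ∃ L : ℝ, 0 < L ∧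
        Tendsto (fun n : ℕ => (1 - f^[n] 0) / (f' 1) ^ n) atTop (𝓝 L) :=
  coalescence_stmt10_general f f' f'' hconv hmono hmap hf' hf'' hcont hf1 hd0 hd1
end

section
/- Let (ψ_t)_{t>0} be a family of convex, monotone increasing functions ψ_t : [0,1] → [0,1] with ψ_t(1) = 1 and 0 < ψ_t(0), ψ_t(s) < 1 for s ∈ [0,1), each having a finite left derivative ψ_t'(1) > 0 at 1, satisfying ψ_{t+h} = ψ_t ∘ ψ_h and ψ_{t+h}'(1) = ψ_t'(1)·ψ_h'(1) for all t, h > 0. Suppose moreover that ψ_1 is twice continuously differentiable on [0,1] and that 0 < ψ_1'(1) < 1 (subcritical case with finite second moment). Then χ(0) := lim_{t→∞} (1 − ψ_t(0)) / ψ_t'(1) exists, is finite, and is strictly positive. -/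
/-!
Write `a t = (1 - ψ t 0) / d t`. The tangent line of the convex function `ψ h` at `1` gives
`1 - ψ h s ≤ d h * (1 - s)`; applied with `s = ψ t 0` and combined with
`d (t + h) = d h * d t`, this makes `a` nonincreasing, and `1 - ψ t 0 ≤ d t`. On the other
hand, the second-order Taylor bound `ψ 1 s ≤ 1 - m (1 - s) + (C / 2) (1 - s)²` with `m = d 1`
gives `a (t + 1) ≥ a t * (1 - K d t)` with `K = C / (2 m)`. At integer times `d n = mⁿ` is
summable, so the product of the factors `1 - K mⁿ` over a tail stays bounded away from `0`,
and the decreasing function `a` converges to a positive limit.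
-/

open Set Filter Topology

lemma ConvexOn.sub_mul_sub_le_of_hasDerivWithinAt_Iic {S : Set ℝ} {f : ℝ → ℝ} {x y f' : ℝ}
    (hfc : ConvexOn ℝ S f) (hx : x ∈ S) (hy : y ∈ S) (hxy : x ≤ y)
    (hf' : HasDerivWithinAt f f' (Iic y) y) : f y - f' * (y - x) ≤ f x := by
  rcases hxy.eq_or_lt with rfl | hxy
  · simp
  have hslope := hfc.slope_le_of_hasDerivWithinAt_Iio hx hy hxy (hf'.mono Iio_subset_Iic_self)
  rw [slope_def_field, div_le_iff₀ (sub_pos.2 hxy)] at hslope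
  linarith

lemma one_sub_le_mul_one_sub_of_convexOn {f : ℝ → ℝ} {L s : ℝ} (hfc : ConvexOn ℝ (Icc 0 1) f)
    (hf1 : f 1 = 1) (hf' : HasDerivWithinAt f L (Iic 1) 1) (hs : s ∈ Icc (0 : ℝ) 1) :
    1 - f s ≤ L * (1 - s) := by
  have := hfc.sub_mul_sub_le_of_hasDerivWithinAt_Iic hs ⟨zero_le_one, le_rfl⟩ hs.2 hf'
  linarith

lemma image_le_sub_mul_add_sq_of_norm_deriv2_le {f f' f'' : ℝ → ℝ} {a b C x : ℝ}
    (hf : ∀ y ∈ Icc a b, HasDerivWithinAt f (f' y) (Icc a b) y)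
    (hf' : ∀ y ∈ Icc a b, HasDerivWithinAt f' (f'' y) (Icc a b) y)
    (hC : ∀ y ∈ Icc a b, ‖f'' y‖ ≤ C) (hx : x ∈ Icc a b) :
    f x ≤ f b - f' b * (b - x) + C / 2 * (b - x) ^ 2 := by
  have hb : b ∈ Icc a b := ⟨hx.1.trans hx.2, le_rfl⟩
  have hf'_ge : ∀ y ∈ Icc a b, f' b - C * (b - y) ≤ f' y := by
    intro y hy
    have := (convex_Icc a b).norm_image_sub_le_of_norm_hasDerivWithin_le hf' hC hy hb
    rw [Real.norm_eq_abs, Real.norm_eq_abs, abs_of_nonneg (sub_nonneg.2 hy.2)] at this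
    linarith [(abs_le.1 this).2]
  set g : ℝ → ℝ := fun y => f b - f' b * (b - y) + C / 2 * (b - y) ^ 2
  have hg : ∀ y, HasDerivAt g (f' b - C * (b - y)) y := fun y => by
    have hlin : HasDerivAt (fun y : ℝ => b - y) (-1) y := by
      simpa using (hasDerivAt_id y).const_sub b
    exact (((hlin.const_mul (f' b)).const_sub (f b)).add
      ((hlin.pow 2).const_mul (C / 2))).congr_deriv (by ring)
  have hmono : MonotoneOn (fun y => f y - g y) (Icc a b) := by
    refine monotoneOn_of_hasDerivWithinAt_nonneg (f' := fun y => f' y - (f' b - C * (b - y)))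
      (convex_Icc a b)
      ((show ContinuousOn f (Icc a b) from fun y hy => (hf y hy).continuousWithinAt).sub
        (by fun_prop))
      (fun y hy => ?_) (fun y hy => ?_)
    · rw [interior_Icc] at hy ⊢
      exact ((hf y (Ioo_subset_Icc_self hy)).mono Ioo_subset_Icc_self).sub (hg y).hasDerivWithinAt
    · rw [interior_Icc] at hy
      exact sub_nonneg.2 (hf'_ge y (Ioo_subset_Icc_self hy))
  have := hmono hx hb hx.2
  simp only [g, sub_self] at this
  linarith

lemma mul_one_sub_sum_le_of_mul_one_sub_le {b x : ℕ → ℝ} {N : ℕ} (hbN : 0 ≤ b N)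
    (hx : ∀ n ≥ N, 0 ≤ x n ∧ x n ≤ 1) (hb : ∀ n ≥ N, b n * (1 - x n) ≤ b (n + 1)) :
    ∀ n ≥ N, b N * (1 - ∑ i ∈ Finset.Ico N n, x i) ≤ b n := by
  intro n hn
  induction n, hn using Nat.le_induction with
  | base => simp
  | succ n hn ih =>
    obtain ⟨hx0, hx1⟩ := hx n hn
    have hS : 0 ≤ ∑ i ∈ Finset.Ico N n, x i :=
      Finset.sum_nonneg fun i hi => (hx i (Finset.mem_Ico.1 hi).1).1
    rw [Finset.sum_Ico_succ_top hn]
    calc b N * (1 - (∑ i ∈ Finset.Ico N n, x i + x n))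
        ≤ b N * (1 - ∑ i ∈ Finset.Ico N n, x i) * (1 - x n) := by
          nlinarith [mul_nonneg (mul_nonneg hbN hS) hx0]
      _ ≤ b n * (1 - x n) := mul_le_mul_of_nonneg_right ih (by linarith)
      _ ≤ b (n + 1) := hb n hn

lemma exists_pos_le_of_mul_one_sub_geom_le {a : ℝ → ℝ} {K m : ℝ}
    (hanti : AntitoneOn a (Ioi 0)) (hpos : ∀ t > 0, 0 < a t) (hK : 0 ≤ K) (hm0 : 0 ≤ m)
    (hm1 : m < 1) (hstep : ∀ n : ℕ, 0 < n → a n * (1 - K * m ^ n) ≤ a (n + 1)) :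
    ∃ c > 0, ∀ t > 0, c ≤ a t := by
  have h1m : 0 < 1 - m := sub_pos.2 hm1
  have htail : Tendsto (fun N : ℕ => K * m ^ N / (1 - m)) atTop (𝓝 0) := by
    simpa using ((tendsto_pow_atTop_nhds_zero_of_lt_one hm0 hm1).const_mul K).div_const (1 - m)
  obtain ⟨N, hN, hN1⟩ :=
    ((htail.eventually (gt_mem_nhds one_pos)).and (eventually_ge_atTop 1)).exists
  have hNpos : (0 : ℝ) < N := by exact_mod_cast hN1
  have hKm : ∀ n ≥ N, K * m ^ n ≤ K * m ^ N :=
    fun n hn => mul_le_mul_of_nonneg_left (pow_le_pow_of_le_one hm0 hm1.le hn) hK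
  have hprod := mul_one_sub_sum_le_of_mul_one_sub_le (b := fun n : ℕ => a n)
    (x := fun n => K * m ^ n) (N := N) (hpos N hNpos).le
    (fun n hn => ⟨by positivity, by
      have := hKm n hn
      rw [div_lt_one h1m] at hN
      linarith⟩)
    (fun n hn => by simpa using hstep n (by omega))
  refine ⟨a N * (1 - K * m ^ N / (1 - m)), mul_pos (hpos N hNpos) (by linarith), ?_⟩
  intro t ht
  set n := max N ⌈t⌉₊
  have htn : t ≤ n := (Nat.le_ceil t).trans (by exact_mod_cast le_max_right N ⌈t⌉₊)
  have hgeom : ∑ i ∈ Finset.Ico N n, K * m ^ i ≤ K * m ^ N / (1 - m) := by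
    rw [← Finset.mul_sum, mul_div_assoc]
    exact mul_le_mul_of_nonneg_left (geom_sum_Ico_le_of_lt_one hm0 hm1) hK
  calc a N * (1 - K * m ^ N / (1 - m))
      ≤ a N * (1 - ∑ i ∈ Finset.Ico N n, K * m ^ i) :=
        mul_le_mul_of_nonneg_left (by linarith) (hpos N hNpos).le
    _ ≤ a n := hprod n (le_max_left _ _)
    _ ≤ a t := hanti ht (ht.trans_le htn) htn

lemma AntitoneOn.exists_tendsto_atTop_of_le {f : ℝ → ℝ} {a c : ℝ} (hf : AntitoneOn f (Ici a))
    (hc : ∀ t ≥ a, c ≤ f t) : ∃ l, c ≤ l ∧ Tendsto f atTop (𝓝 l) := by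
  set g : ℝ → ℝ := fun t => f (max t a)
  have hg : Antitone g := fun s t hst =>
    hf (le_max_right s a) (le_max_right t a) (max_le_max hst le_rfl)
  refine ⟨⨅ t, g t, le_ciInf fun t => hc _ (le_max_right _ _), ?_⟩
  refine (tendsto_atTop_ciInf hg ⟨c, ?_⟩).congr' ?_
  · rintro _ ⟨t, rfl⟩
    exact hc _ (le_max_right _ _)
  · filter_upwards [eventually_ge_atTop a] with t ht
    simp [g, max_eq_left ht]

noncomputable def survivalRatio (ψ : ℝ → ℝ → ℝ) (d : ℝ → ℝ) (t : ℝ) : ℝ := (1 - ψ t 0) / d t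

section Semigroup

variable {ψ : ℝ → ℝ → ℝ} {d : ℝ → ℝ}

lemma survivalRatio_pos (hlt : ∀ t > 0, ∀ s ∈ Ico (0:ℝ) 1, ψ t s < 1)
    (hd0 : ∀ t > 0, 0 < d t) {t : ℝ} (ht : 0 < t) : 0 < survivalRatio ψ d t :=
  div_pos (sub_pos.2 (hlt t ht 0 ⟨le_rfl, one_pos⟩)) (hd0 t ht)

lemma survivalRatio_antitoneOn (hconv : ∀ t > 0, ConvexOn ℝ (Icc 0 1) (ψ t))
    (hmap : ∀ t > 0, MapsTo (ψ t) (Icc 0 1) (Icc 0 1)) (h1 : ∀ t > 0, ψ t 1 = 1)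
    (hd : ∀ t > 0, HasDerivWithinAt (ψ t) (d t) (Iic 1) 1) (hd0 : ∀ t > 0, 0 < d t)
    (hsemi : ∀ t > 0, ∀ h > 0, ∀ s ∈ Icc (0:ℝ) 1, ψ (t + h) s = ψ t (ψ h s))
    (hdmul : ∀ t > 0, ∀ h > 0, d (t + h) = d t * d h) :
    AntitoneOn (survivalRatio ψ d) (Ioi 0) := by
  intro s (hs : 0 < s) t _ hst
  rcases hst.eq_or_lt with rfl | hst
  · rfl
  have hh : 0 < t - s := sub_pos.2 hst
  have h0 : (0 : ℝ) ∈ Icc (0 : ℝ) 1 := ⟨le_rfl, zero_le_one⟩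
  have hψ : ψ t 0 = ψ (t - s) (ψ s 0) := by
    rw [← hsemi _ hh _ hs _ h0, sub_add_cancel]
  have hdt : d t = d (t - s) * d s := by
    rw [← hdmul _ hh _ hs, sub_add_cancel]
  have hle := one_sub_le_mul_one_sub_of_convexOn (hconv _ hh) (h1 _ hh) (hd _ hh) (hmap s hs h0)
  rw [← hψ] at hle
  unfold survivalRatio
  rw [hdt, div_le_div_iff₀ (mul_pos (hd0 _ hh) (hd0 _ hs)) (hd0 _ hs)]
  nlinarith [hd0 s hs]

lemma apply_natCast_eq_pow_of_add_eq_mul (hdmul : ∀ t > 0, ∀ h > 0, d (t + h) = d t * d h)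
    {n : ℕ} (hn : 0 < n) : d n = d 1 ^ n := by
  induction n, hn using Nat.le_induction with
  | base => simp
  | succ n hn ih =>
    rw [Nat.cast_succ, hdmul _ (by exact_mod_cast hn) _ one_pos, ih, pow_succ]

lemma survivalRatio_mul_le_add_one {C : ℝ} (hC : 0 ≤ C)
    (hconv : ∀ t > 0, ConvexOn ℝ (Icc 0 1) (ψ t))
    (hmap : ∀ t > 0, MapsTo (ψ t) (Icc 0 1) (Icc 0 1)) (h1 : ∀ t > 0, ψ t 1 = 1)
    (hd : ∀ t > 0, HasDerivWithinAt (ψ t) (d t) (Iic 1) 1) (hd0 : ∀ t > 0, 0 < d t)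
    (hsemi : ∀ t > 0, ∀ h > 0, ∀ s ∈ Icc (0:ℝ) 1, ψ (t + h) s = ψ t (ψ h s))
    (hdmul : ∀ t > 0, ∀ h > 0, d (t + h) = d t * d h)
    (hquad : ∀ s ∈ Icc (0:ℝ) 1, ψ 1 s ≤ 1 - d 1 * (1 - s) + C / 2 * (1 - s) ^ 2)
    {t : ℝ} (ht : 0 < t) :
    survivalRatio ψ d t * (1 - C / (2 * d 1) * d t) ≤ survivalRatio ψ d (t + 1) := by
  have h0 : (0 : ℝ) ∈ Icc (0 : ℝ) 1 := ⟨le_rfl, zero_le_one⟩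
  have hm := hd0 1 one_pos
  have hdt := hd0 t ht
  have hu := one_sub_le_mul_one_sub_of_convexOn (hconv t ht) (h1 t ht) (hd t ht) h0
  have hψ : ψ (t + 1) 0 = ψ 1 (ψ t 0) := by rw [add_comm, hsemi 1 one_pos t ht 0 h0]
  have hq := hquad _ (hmap t ht h0)
  rw [← hψ] at hq
  obtain ⟨-, hψ1⟩ := hmap t ht h0
  unfold survivalRatio
  rw [hdmul t ht 1 one_pos, div_mul_eq_mul_div, div_le_div_iff₀ hdt (mul_pos hdt hm)]
  field_simp
  nlinarith [mul_nonneg (mul_nonneg hC (sub_nonneg.2 (by linarith : 1 - ψ t 0 ≤ d t)))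
    (sub_nonneg.2 hψ1)]

end Semigroup

theorem coalescence_stmt11_general (ψ : ℝ → ℝ → ℝ) (d : ℝ → ℝ) (ψ₁' ψ₁'' : ℝ → ℝ)
    (hconv : ∀ t > 0, ConvexOn ℝ (Icc 0 1) (ψ t))
    (hmap : ∀ t > 0, MapsTo (ψ t) (Icc 0 1) (Icc 0 1))
    (h1 : ∀ t > 0, ψ t 1 = 1)
    (hlt : ∀ t > 0, ∀ s ∈ Ico (0:ℝ) 1, ψ t s < 1)
    (hd : ∀ t > 0, HasDerivWithinAt (ψ t) (d t) (Iic 1) 1)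
    (hd0 : ∀ t > 0, 0 < d t)
    (hsemi : ∀ t > 0, ∀ h > 0, ∀ s ∈ Icc (0:ℝ) 1, ψ (t + h) s = ψ t (ψ h s))
    (hdmul : ∀ t > 0, ∀ h > 0, d (t + h) = d t * d h)
    (hψ₁' : ∀ s ∈ Icc (0:ℝ) 1, HasDerivWithinAt (ψ 1) (ψ₁' s) (Icc 0 1) s)
    (hψ₁'' : ∀ s ∈ Icc (0:ℝ) 1, HasDerivWithinAt ψ₁' (ψ₁'' s) (Icc 0 1) s)
    (hcont : ContinuousOn ψ₁'' (Icc 0 1))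
    (hd1 : d 1 = ψ₁' 1) (hsub : d 1 < 1) :
    ∃ χ0 : ℝ, 0 < χ0 ∧
      Tendsto (fun t => (1 - ψ t 0) / d t) atTop (𝓝 χ0) := by
  obtain ⟨C, hC⟩ := isCompact_Icc.exists_bound_of_continuousOn hcont
  have hC0 : 0 ≤ C := (norm_nonneg _).trans (hC 1 ⟨zero_le_one, le_rfl⟩)
  have hquad : ∀ s ∈ Icc (0:ℝ) 1, ψ 1 s ≤ 1 - d 1 * (1 - s) + C / 2 * (1 - s) ^ 2 :=
    fun s hs => by
      simpa only [h1 1 one_pos, hd1] using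
        image_le_sub_mul_add_sq_of_norm_deriv2_le hψ₁' hψ₁'' hC hs
  have hanti := survivalRatio_antitoneOn hconv hmap h1 hd hd0 hsemi hdmul
  obtain ⟨c, hc, hca⟩ := exists_pos_le_of_mul_one_sub_geom_le (K := C / (2 * d 1)) hanti
    (fun t ht => survivalRatio_pos hlt hd0 ht) (by positivity [hd0 1 one_pos])
    (hd0 1 one_pos).le hsub fun n hn => by
      simpa only [apply_natCast_eq_pow_of_add_eq_mul hdmul hn] using
        survivalRatio_mul_le_add_one hC0 hconv hmap h1 hd hd0 hsemi hdmul hquad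
          (Nat.cast_pos.2 hn)
  obtain ⟨l, hcl, hl⟩ := (hanti.mono (Ici_subset_Ioi.2 one_pos)).exists_tendsto_atTop_of_le
    fun t ht => hca t (one_pos.trans_le ht)
  exact ⟨l, hc.trans_le hcl, hl⟩

/-- For a composition semigroup (ψ_t)_{t>0} of convex, monotone
increasing functions on [0,1] fixing 1, with 0 < ψ_t(0), ψ_t(s) < 1 on [0,1),
positive multiplicative left derivatives d t = ψ_t'(1) at 1, and ψ_1 twice
continuously differentiable on [0,1] with 0 < ψ_1'(1) < 1, the limit
χ(0) = lim_{t→∞} (1 − ψ_t(0))/ψ_t'(1) exists, is finite and strictly positive. -/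
theorem coalescence_stmt11 (ψ : ℝ → ℝ → ℝ) (d : ℝ → ℝ) (ψ₁' ψ₁'' : ℝ → ℝ)
    (hconv : ∀ t > 0, ConvexOn ℝ (Icc 0 1) (ψ t))
    (hmono : ∀ t > 0, MonotoneOn (ψ t) (Icc 0 1))
    (hmap : ∀ t > 0, MapsTo (ψ t) (Icc 0 1) (Icc 0 1))
    (h1 : ∀ t > 0, ψ t 1 = 1)
    (h0 : ∀ t > 0, 0 < ψ t 0)
    (hlt : ∀ t > 0, ∀ s ∈ Ico (0:ℝ) 1, ψ t s < 1)
    (hd : ∀ t > 0, HasDerivWithinAt (ψ t) (d t) (Iic 1) 1)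
    (hd0 : ∀ t > 0, 0 < d t)
    (hsemi : ∀ t > 0, ∀ h > 0, ∀ s ∈ Icc (0:ℝ) 1, ψ (t + h) s = ψ t (ψ h s))
    (hdmul : ∀ t > 0, ∀ h > 0, d (t + h) = d t * d h)
    (hψ₁' : ∀ s ∈ Icc (0:ℝ) 1, HasDerivWithinAt (ψ 1) (ψ₁' s) (Icc 0 1) s)
    (hψ₁'' : ∀ s ∈ Icc (0:ℝ) 1, HasDerivWithinAt ψ₁' (ψ₁'' s) (Icc 0 1) s)
    (hcont : ContinuousOn ψ₁'' (Icc 0 1))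
    (hd1 : d 1 = ψ₁' 1) (hsub : d 1 < 1) :
    ∃ χ0 : ℝ, 0 < χ0 ∧
      Tendsto (fun t => (1 - ψ t 0) / d t) atTop (𝓝 χ0) :=
  coalescence_stmt11_general ψ d ψ₁' ψ₁'' hconv hmap h1 hlt hd hd0 hsemi hdmul hψ₁' hψ₁'' hcont hd1
    hsub
end

section
/- Let (ψ_t)_{t>0} be a family of functions ψ_t : [0,1] → [0,1] with ψ_t(1) = 1 and ψ_t(0) < 1, satisfying ψ_{t+h} = ψ_t ∘ ψ_h, each having a finite left derivative ψ_t'(1) at 1 with ψ_{t+h}'(1) = ψ_t'(1)·ψ_h'(1). Suppose χ(0) := lim_{t→∞} (1 − ψ_t(0)) / ψ_t'(1) exists with 0 < χ(0) < ∞, and that for every s ∈ [0,1] the limit g(s) := lim_{h→∞} (ψ_h(s) − ψ_h(0)) / (1 − ψ_h(0)) exists. Then for every t > 0: g(ψ_t(0)) = 1 − ψ_t'(1). -/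
open Set Filter Topology

/-- For a composition semigroup (ψ_t)_{t>0} on [0,1] fixing 1 with
ψ_t(0) < 1, multiplicative left derivatives d t = ψ_t'(1) at 1, with
χ(0) = lim (1 − ψ_t(0))/ψ_t'(1) ∈ (0,∞) and g(s) = lim_h (ψ_h(s) − ψ_h(0))/(1 − ψ_h(0))
existing for all s ∈ [0,1], one has g(ψ_t(0)) = 1 − ψ_t'(1) for every t > 0. -/
theorem coalescence_stmt13 (ψ : ℝ → ℝ → ℝ) (d : ℝ → ℝ) (g : ℝ → ℝ) (χ0 : ℝ)
    (hmap : ∀ t > 0, MapsTo (ψ t) (Icc 0 1) (Icc 0 1))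
    (h1 : ∀ t > 0, ψ t 1 = 1)
    (h0 : ∀ t > 0, ψ t 0 < 1)
    (hsemi : ∀ t > 0, ∀ h > 0, ∀ s ∈ Icc (0:ℝ) 1, ψ (t + h) s = ψ t (ψ h s))
    (hd : ∀ t > 0, HasDerivWithinAt (ψ t) (d t) (Iic 1) 1)
    (hdmul : ∀ t > 0, ∀ h > 0, d (t + h) = d t * d h)
    (hχ : Tendsto (fun t => (1 - ψ t 0) / d t) atTop (𝓝 χ0))
    (hχ0 : 0 < χ0)
    (hg : ∀ s ∈ Icc (0:ℝ) 1,
      Tendsto (fun h => (ψ h s - ψ h 0) / (1 - ψ h 0)) atTop (𝓝 (g s))) :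
    ∀ t > 0, g (ψ t 0) = 1 - d t := by
  intro t ht
  have hmem : ψ t 0 ∈ Icc (0:ℝ) 1 := hmap t ht ⟨le_refl 0, zero_le_one⟩
  set a : ℝ → ℝ := fun h => (1 - ψ h 0) / d h with ha
  have hshift : Tendsto (fun h => a (t + h)) atTop (𝓝 χ0) :=
    hχ.comp (tendsto_atTop_add_const_left _ t tendsto_id)
  have hdt : d t ≠ 0 := by
    intro hdt0
    have heq : ∀ᶠ h in atTop, a (t + h) = 0 := by
      filter_upwards [eventually_gt_atTop 0] with h hh
      simp [ha, hdmul t ht h hh, hdt0]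
    have h0' : Tendsto (fun h => a (t + h)) atTop (𝓝 0) :=
      Tendsto.congr' (heq.mono fun _ e => e.symm) tendsto_const_nhds
    exact hχ0.ne' (tendsto_nhds_unique hshift h0')
  have hane : ∀ᶠ h in atTop, a h ≠ 0 := hχ.eventually_ne hχ0.ne'
  have key : ∀ᶠ h in atTop,
      (ψ h (ψ t 0) - ψ h 0) / (1 - ψ h 0) = 1 - a (t + h) / a h * d t := by
    filter_upwards [eventually_gt_atTop 0, hane] with h hh hne
    have h1h : 1 - ψ h 0 ≠ 0 := sub_ne_zero.2 (h0 h hh).ne'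
    have hdh : d h ≠ 0 := fun e => hne (by simp [ha, e])
    have hψ : ψ h (ψ t 0) = ψ (t + h) 0 := by
      rw [add_comm]; exact (hsemi h hh t ht 0 ⟨le_refl 0, zero_le_one⟩).symm
    have hdth : d (t + h) = d t * d h := hdmul t ht h hh
    rw [hψ]
    simp only [ha, hdth]
    field_simp
    ring
  have hlim : Tendsto (fun h => (ψ h (ψ t 0) - ψ h 0) / (1 - ψ h 0)) atTop
      (𝓝 (1 - d t)) := by
    have h2 : Tendsto (fun h => 1 - a (t + h) / a h * d t) atTop
        (𝓝 (1 - χ0 / χ0 * d t)) :=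
      tendsto_const_nhds.sub ((hshift.div hχ hχ0.ne').mul tendsto_const_nhds)
    rw [div_self hχ0.ne', one_mul] at h2
    exact h2.congr' (key.mono fun _ e => e.symm)
  exact tendsto_nhds_unique (hg _ hmem) hlim
end

section
/- Let (ψ_t)_{t>0} be a family of functions ψ_t : [0,1] → [0,1] with ψ_t(1) = 1 and ψ_t(0) < 1, satisfying ψ_{t+h} = ψ_t ∘ ψ_h and ψ_{t+h}'(1) = ψ_t'(1)·ψ_h'(1) for finite left derivatives ψ_t'(1) at 1, such that χ(0) := lim_{t→∞} (1 − ψ_t(0)) / ψ_t'(1) exists with 0 < χ(0) < ∞, ψ_t(0) → 1 as t → ∞, and for every s ∈ [0,1] the limit g(s) := lim_{h→∞} (ψ_h(s) − ψ_h(0)) / (1 − ψ_h(0)) exists. Then lim_{t→∞} (g(ψ_t(0)) − 1) / (ψ_t(0) − 1) = 1/χ(0); in particular, if g has a left derivative g'(1) at 1, then g'(1) = 1/χ(0). -/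
open Set Filter Topology

/-- In the setting of Statement 13, assuming moreover ψ_t(0) → 1 as
t → ∞, one has lim_{t→∞} (g(ψ_t(0)) − 1)/(ψ_t(0) − 1) = 1/χ(0); in particular,
if g has a left derivative g'(1) at 1, then g'(1) = 1/χ(0). -/
theorem coalescence_stmt14 (ψ : ℝ → ℝ → ℝ) (d : ℝ → ℝ) (g : ℝ → ℝ) (χ0 : ℝ)
    (hmap : ∀ t > 0, MapsTo (ψ t) (Icc 0 1) (Icc 0 1))
    (h1 : ∀ t > 0, ψ t 1 = 1)
    (h0 : ∀ t > 0, ψ t 0 < 1)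
    (hsemi : ∀ t > 0, ∀ h > 0, ∀ s ∈ Icc (0:ℝ) 1, ψ (t + h) s = ψ t (ψ h s))
    (hd : ∀ t > 0, HasDerivWithinAt (ψ t) (d t) (Iic 1) 1)
    (hdmul : ∀ t > 0, ∀ h > 0, d (t + h) = d t * d h)
    (hχ : Tendsto (fun t => (1 - ψ t 0) / d t) atTop (𝓝 χ0))
    (hχ0 : 0 < χ0)
    (hto1 : Tendsto (fun t => ψ t 0) atTop (𝓝 1))
    (hg : ∀ s ∈ Icc (0:ℝ) 1,
      Tendsto (fun h => (ψ h s - ψ h 0) / (1 - ψ h 0)) atTop (𝓝 (g s))) :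
    Tendsto (fun t => (g (ψ t 0) - 1) / (ψ t 0 - 1)) atTop (𝓝 (1 / χ0)) ∧
      ∀ L : ℝ, HasDerivWithinAt g L (Iio 1) 1 → L = 1 / χ0 := by
  set A : ℝ → ℝ := fun t => (1 - ψ t 0) / d t with hA
  -- eventually d h ≠ 0
  have hdne : ∀ᶠ h in atTop, d h ≠ 0 := by
    have hA0 : ∀ᶠ h in atTop, A h ≠ 0 :=
      hχ.eventually (eventually_ne_nhds hχ0.ne')
    filter_upwards [hA0] with h hh hd0
    exact hh (by simp [hA, hd0])
  -- in fact d t ≠ 0 for all t > 0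
  have hdall : ∀ t, 0 < t → d t ≠ 0 := by
    intro t ht
    obtain ⟨N, hN⟩ := eventually_atTop.1 hdne
    have h1' : (0:ℝ) < max N 1 := lt_of_lt_of_le one_pos (le_max_right _ _)
    have hht : d (t + max N 1) ≠ 0 :=
      hN _ (le_trans (le_max_left _ _) (le_add_of_nonneg_left ht.le))
    rw [hdmul t ht _ h1'] at hht
    exact fun h => hht (by rw [h, zero_mul])
  -- key identity : g (ψ t 0) = 1 - d t for t > 0
  have key : ∀ t, 0 < t → g (ψ t 0) = 1 - d t := by
    intro t ht
    have hmem : ψ t 0 ∈ Icc (0:ℝ) 1 := hmap t ht ⟨le_refl 0, zero_le_one⟩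
    have l1 := hg (ψ t 0) hmem
    have l2 : Tendsto (fun h => (ψ h (ψ t 0) - ψ h 0) / (1 - ψ h 0)) atTop
        (𝓝 (1 - d t)) := by
      have hAshift : Tendsto (fun h => A (h + t)) atTop (𝓝 χ0) :=
        hχ.comp (tendsto_atTop_add_const_right atTop t tendsto_id)
      have hratio : Tendsto (fun h => A (h + t) / A h * d t) atTop (𝓝 (d t)) := by
        have := (hAshift.div hχ hχ0.ne').mul_const (d t)
        simpa [div_self hχ0.ne'] using this
      have hone : Tendsto (fun h => 1 - A (h + t) / A h * d t) atTop (𝓝 (1 - d t)) :=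
        tendsto_const_nhds.sub hratio
      refine hone.congr' ?_
      filter_upwards [hdne, eventually_gt_atTop 0] with h hdh hh
      have hsub : (1:ℝ) - ψ h 0 ≠ 0 := sub_ne_zero.2 (h0 h hh).ne'
      have hcomp : ψ (h + t) 0 = ψ h (ψ t 0) :=
        hsemi h hh t ht 0 ⟨le_refl 0, zero_le_one⟩
      have hAne : A h ≠ 0 := div_ne_zero hsub hdh
      have hAht : A (h + t) = (1 - ψ h (ψ t 0)) / (d h * d t) := by
        rw [hA]
        simp only
        rw [hcomp, hdmul h hh t ht]
      have hdt : d t ≠ 0 := hdall t ht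
      rw [hAht, hA]
      simp only
      field_simp
      ring
    exact tendsto_nhds_unique l1 l2
  -- part 1
  have part1 : Tendsto (fun t => (g (ψ t 0) - 1) / (ψ t 0 - 1)) atTop (𝓝 (1 / χ0)) := by
    have hinv : Tendsto (fun t => 1 / A t) atTop (𝓝 (1 / χ0)) := by
      simpa only [one_div] using hχ.inv₀ hχ0.ne'
    refine hinv.congr' ?_
    filter_upwards [eventually_gt_atTop 0] with t ht
    rw [key t ht, hA]
    simp only
    rw [one_div_div]
    rw [show (1 - d t - 1) = -(d t) by ring, show (ψ t 0 - 1) = -(1 - ψ t 0) by ring,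
      neg_div_neg_eq]
  refine ⟨part1, ?_⟩
  -- g 1 = 1
  have hg1 : g 1 = 1 := by
    have l1 := hg 1 ⟨zero_le_one, le_refl 1⟩
    have l2 : Tendsto (fun h => (ψ h 1 - ψ h 0) / (1 - ψ h 0)) atTop (𝓝 1) := by
      refine tendsto_const_nhds.congr' ?_
      filter_upwards [eventually_gt_atTop 0] with h hh
      rw [h1 h hh, div_self (sub_ne_zero.2 (h0 h hh).ne')]
    exact tendsto_nhds_unique l1 l2
  intro L hL
  have hslope := hasDerivWithinAt_iff_tendsto_slope.1 hL
  have hIio : Iio (1:ℝ) \ {1} = Iio 1 := by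
    ext x; simp [lt_iff_le_and_ne, fun h : x < 1 => h.ne]
  rw [hIio] at hslope
  have hpsito : Tendsto (fun t => ψ t 0) atTop (𝓝[Iio 1] 1) := by
    rw [tendsto_nhdsWithin_iff]
    exact ⟨hto1, by filter_upwards [eventually_gt_atTop 0] with t ht; exact h0 t ht⟩
  have hcompL : Tendsto (fun t => slope g 1 (ψ t 0)) atTop (𝓝 L) :=
    hslope.comp hpsito
  have heq : Tendsto (fun t => (g (ψ t 0) - 1) / (ψ t 0 - 1)) atTop (𝓝 L) := by
    refine hcompL.congr ?_
    intro t
    rw [slope_def_field, hg1]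
  exact tendsto_nhds_unique heq part1
end

section
/- Let (ψ_t)_{t>0} be a family of probability generating functions, ψ_t(s) = Σ_{k≥0} p_k(t) s^k with p_k(t) ≥ 0 and Σ_{k≥0} p_k(t) = 1, with ψ_t(0) < 1 for all t and ψ_t(0) → 1 as t → ∞. Let g(s) = Σ_{k≥1} α_k s^k with α_k ≥ 0, Σ_{k≥1} α_k = 1 and Σ_{k≥1} k·α_k < ∞, and suppose that for every s ∈ [0,1]: (ψ_t(s) − ψ_t(0)) / (1 − ψ_t(0)) → g(s) as t → ∞. Then for every integer x ≥ 1 and every s ∈ [0,1): lim_{t→∞} x·ψ_t'(s)·ψ_t(s)^{x−1} / (1 − ψ_t(0)^x) = g'(s), and g'(s) ≤ g'(1) = Σ_{k≥1} k·α_k < ∞. -/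
/-!
Write `F_t(u) = (ψ_t(u) - ψ_t(0)) / (1 - ψ_t(0)) = ∑_{k ≥ 1} c_k(t) u^k`, where `0 ≤ c_k(t) ≤ 1`
is the law of `Z_t` conditioned on `Z_t > 0`. All `F_t` and `g` are power series with coefficients
in `[-1, 1]`, so on `[0, r]` they obey one and the same Taylor bound
`|F(u) - F(s) - (u - s) F'(s)| ≤ (u - s)² / (1 - r)³`. Hence `F_t'(s)` and `g'(s)` lie within
`O(u - s)` of the secant slopes over `[s, u]`, and pointwise convergence `F_t → g` of those slopes
forces `F_t'(s) = ψ_t'(s) / (1 - ψ_t(0)) → g'(s)`. The remaining factor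
`x ψ_t(s)^{x-1} / (1 + ψ_t(0) + ⋯ + ψ_t(0)^{x-1})` tends to `1` since `ψ_t(s), ψ_t(0) → 1`.
At `s = 1` the slope of `g` is `∑ α_k (1 + y + ⋯ + y^{k-1})`, dominated by `∑ k α_k`.
-/

open Set Filter Topology

theorem tsum_mul_zero_pow (q : ℕ → ℝ) : ∑' k, q k * 0 ^ k = q 0 :=
  (tsum_eq_single 0 fun k hk => by simp [hk]).trans (by simp)

theorem hasSum_of_tsum_eq_one {q : ℕ → ℝ} (hq : ∑' k, q k = 1) : HasSum q 1 := by
  by_cases h : Summable q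
  · exact hq ▸ h.hasSum
  · simp [tsum_eq_zero_of_not_summable h] at hq

theorem hasSum_natCast_mul_pow_sub_one {x : ℝ} (hx : |x| < 1) :
    HasSum (fun k : ℕ => (k : ℝ) * x ^ (k - 1)) (1 / (1 - x) ^ 2) := by
  rw [← hasSum_nat_add_iff' 1]
  simpa [add_comm] using hasSum_choose_mul_geometric_of_norm_lt_one 1 (r := x) hx

theorem natCast_mul_pow_sub_one_mul_le {s u : ℝ} (hs : 0 ≤ s) (hsu : s ≤ u) (k : ℕ) :
    (k * s ^ (k - 1)) * (u - s) ≤ u ^ k - s ^ k := by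
  rcases hsu.eq_or_lt with rfl | hsu
  · simp
  have := (convexOn_pow k).le_slope_of_hasDerivAt hs (hs.trans hsu.le) hsu (hasDerivAt_pow k s)
  rwa [slope_def_field, le_div_iff₀ (sub_pos.mpr hsu)] at this

section PowerSeries

variable {c : ℕ → ℝ}

theorem summable_mul_pow (hc : ∀ k, |c k| ≤ 1) {x : ℝ} (hx : |x| < 1) :
    Summable fun k => c k * x ^ k := by
  refine .of_norm_bounded (summable_geometric_of_lt_one (abs_nonneg x) hx) fun k => ?_
  rw [Real.norm_eq_abs, abs_mul, abs_pow]
  exact mul_le_of_le_one_left (by positivity) (hc k)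

theorem summable_mul_natCast_mul_pow_sub_one (hc : ∀ k, |c k| ≤ 1) {x : ℝ} (hx : |x| < 1) :
    Summable fun k : ℕ => c k * (k * x ^ (k - 1)) := by
  refine .of_norm_bounded (hasSum_natCast_mul_pow_sub_one (abs_abs x ▸ hx)).summable fun k => ?_
  rw [Real.norm_eq_abs, abs_mul, abs_mul, abs_pow, Nat.abs_cast]
  exact mul_le_of_le_one_left (by positivity) (hc k)

theorem hasDerivAt_tsum_mul_pow (hc : ∀ k, |c k| ≤ 1) {x : ℝ} (hx : |x| < 1) :
    HasDerivAt (fun y => ∑' k, c k * y ^ k) (∑' k : ℕ, c k * (k * x ^ (k - 1))) x := by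
  obtain ⟨r, hxr, hr⟩ := exists_between hx
  have hr0 : 0 < r := (abs_nonneg x).trans_lt hxr
  refine hasDerivAt_tsum_of_isPreconnected
    (hasSum_natCast_mul_pow_sub_one (abs_of_pos hr0 ▸ hr)).summable isOpen_Ioo
    isPreconnected_Ioo (fun k y _ => (hasDerivAt_pow k y).const_mul (c k)) (fun k y hy => ?_)
    (y₀ := 0) ⟨by linarith, by linarith⟩ (summable_mul_pow hc (by simp))
    (abs_lt.mp hxr)
  have hyr : |y| ≤ r := abs_le.mpr ⟨hy.1.le, hy.2.le⟩
  rw [Real.norm_eq_abs, abs_mul, abs_mul, abs_pow, Nat.abs_cast]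
  exact mul_le_of_le_one_left (by positivity) (hc k) |>.trans (by gcongr)

theorem abs_tsum_mul_pow_sub_sub_le (hc : ∀ k, |c k| ≤ 1) {s u r : ℝ} (hs : 0 ≤ s) (hsu : s ≤ u)
    (hur : u ≤ r) (hr : r < 1) :
    |∑' k, c k * u ^ k - ∑' k, c k * s ^ k - (u - s) * ∑' k : ℕ, c k * (k * s ^ (k - 1))|
      ≤ (u - s) ^ 2 / (1 - r) ^ 3 := by
  have hu : u < 1 := hur.trans_lt hr
  have hu' : |u| < 1 := abs_lt.mpr ⟨by linarith, hu⟩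
  have hs' : |s| < 1 := abs_lt.mpr ⟨by linarith, by linarith⟩
  -- the Taylor remainders of the monomials are nonnegative (convexity)
  -- and sum to the Taylor remainder of `1 / (1 - x)`
  have hsum : (1 - u)⁻¹ - (1 - s)⁻¹ - (u - s) * (1 / (1 - s) ^ 2)
      = (u - s) ^ 2 / ((1 - u) * (1 - s) ^ 2) := by
    field_simp [(by linarith : (1 - u) ≠ 0), (by linarith : (1 - s) ≠ 0)]
    ring
  have hR : HasSum (fun k : ℕ => u ^ k - s ^ k - (u - s) * (k * s ^ (k - 1)))
      ((u - s) ^ 2 / ((1 - u) * (1 - s) ^ 2)) :=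
    hsum ▸ ((hasSum_geometric_of_lt_one (hs.trans hsu) hu).sub
      (hasSum_geometric_of_lt_one hs (hsu.trans_lt hu))).sub
      ((hasSum_natCast_mul_pow_sub_one hs').mul_left (u - s))
  refine ((((summable_mul_pow hc hu').hasSum.sub (summable_mul_pow hc hs').hasSum).sub
    ((summable_mul_natCast_mul_pow_sub_one hc hs').hasSum.mul_left (u - s))).norm_le_of_bounded
    hR fun k => ?_).trans ?_
  · have hRk : 0 ≤ u ^ k - s ^ k - (u - s) * (k * s ^ (k - 1)) := by
      linarith [natCast_mul_pow_sub_one_mul_le hs hsu k]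
    calc |c k * u ^ k - c k * s ^ k - (u - s) * (c k * (k * s ^ (k - 1)))|
        = |c k| * (u ^ k - s ^ k - (u - s) * (k * s ^ (k - 1))) := by
          rw [← abs_of_nonneg hRk, ← abs_mul]; ring_nf
      _ ≤ u ^ k - s ^ k - (u - s) * (k * s ^ (k - 1)) := mul_le_of_le_one_left hRk (hc k)
  · have hr' : 0 < 1 - r := by linarith
    calc (u - s) ^ 2 / ((1 - u) * (1 - s) ^ 2) ≤ (u - s) ^ 2 / ((1 - r) * (1 - r) ^ 2) := by
          gcongr; linarith
      _ = (u - s) ^ 2 / (1 - r) ^ 3 := by ring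

end PowerSeries

theorem tendsto_of_sq_bound_of_hasDerivWithinAt {ι : Type*} {l : Filter ι} {f : ι → ℝ → ℝ}
    {f' : ι → ℝ} {g : ℝ → ℝ} {g' s δ C : ℝ} (hδ : 0 < δ)
    (hf : ∀ i, ∀ u ∈ Ioo s (s + δ), |f i u - f i s - (u - s) * f' i| ≤ C * (u - s) ^ 2)
    (hlim : ∀ u ∈ Ico s (s + δ), Tendsto (fun i => f i u) l (𝓝 (g u)))
    (hg : HasDerivWithinAt g g' (Ioi s) s) :
    Tendsto f' l (𝓝 g') := by
  rw [Metric.tendsto_nhds]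
  intro ε hε
  have hslope := Metric.tendsto_nhds.mp
    ((hasDerivWithinAt_iff_tendsto_slope' (lt_irrefl s)).mp hg) (ε / 4) (by positivity)
  have hsmall : ∀ᶠ u in 𝓝[>] s, C * (u - s) < ε / 4 := by
    refine Tendsto.eventually_lt_const (by positivity) (tendsto_nhdsWithin_of_tendsto_nhds ?_)
    simpa using ((continuous_sub_right s).const_mul C).tendsto s
  have hnear : ∀ᶠ u in 𝓝[>] s, u ∈ Ioo s (s + δ) := Ioo_mem_nhdsGT (by linarith)
  obtain ⟨u, ⟨hu, hCu⟩, hgu⟩ := ((hnear.and hsmall).and hslope).exists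
  have hus : 0 < u - s := sub_pos.mpr hu.1
  filter_upwards [Metric.tendsto_nhds.mp (hlim u (Ioo_subset_Ico_self hu)) (ε * (u - s) / 4)
      (by positivity), Metric.tendsto_nhds.mp (hlim s ⟨le_rfl, by linarith⟩) (ε * (u - s) / 4)
      (by positivity)] with i hiu his
  rw [Real.dist_eq] at hiu his hgu ⊢
  rw [slope_def_field, div_sub' hus.ne', abs_div, abs_of_pos hus, div_lt_iff₀ hus] at hgu
  have hfi := hf i u hu
  have key : |(u - s) * (f' i - g')| < (u - s) * ε := by
    calc |(u - s) * (f' i - g')|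
        ≤ |f i u - f i s - (u - s) * f' i| + |f i u - g u| + |f i s - g s|
          + |g u - g s - (u - s) * g'| := by
          rw [abs_le]
          constructor <;> linarith [le_abs_self (f i u - f i s - (u - s) * f' i),
            neg_abs_le (f i u - f i s - (u - s) * f' i), le_abs_self (f i u - g u),
            neg_abs_le (f i u - g u), le_abs_self (f i s - g s), neg_abs_le (f i s - g s),
            le_abs_self (g u - g s - (u - s) * g'), neg_abs_le (g u - g s - (u - s) * g')]
      _ < (u - s) * ε := by
          have hCu' : C * (u - s) ^ 2 < ε / 4 * (u - s) := by
            rw [sq, ← mul_assoc]; exact mul_lt_mul_of_pos_right hCu hus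
          linarith
  rwa [abs_mul, abs_of_pos hus, mul_lt_mul_iff_right₀ hus] at key

theorem tendsto_deriv_tsum_mul_pow_div_one_sub {ι : Type*} {l : Filter ι} {p : ι → ℕ → ℝ}
    {α : ℕ → ℝ} (hp0 : ∀ i k, 0 ≤ p i k) (hp1 : ∀ i, HasSum (p i) 1) (hp : ∀ i, p i 0 < 1)
    (hα : ∀ k, |α k| ≤ 1) {s : ℝ} (hs0 : 0 ≤ s) (hs1 : s < 1)
    (hconv : ∀ u ∈ Ico s 1, Tendsto (fun i => (∑' k, p i k * u ^ k - p i 0) / (1 - p i 0)) l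
      (𝓝 (∑' k, α k * u ^ k))) :
    Tendsto (fun i => deriv (fun u => ∑' k, p i k * u ^ k) s / (1 - p i 0)) l
      (𝓝 (deriv (fun u => ∑' k, α k * u ^ k) s)) := by
  -- the law of `p i` conditioned on being nonzero
  set c : ι → ℕ → ℝ := fun i k => if k = 0 then 0 else p i k / (1 - p i 0) with hc_def
  have hc : ∀ i k, |c i k| ≤ 1 := by
    intro i k
    by_cases hk : k = 0
    · simp [hc_def, hk]
    have h0k := sum_le_hasSum {0, k} (fun j _ => hp0 i j) (hp1 i)
    rw [Finset.sum_pair (Ne.symm hk)] at h0k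
    have hp' : 0 < 1 - p i 0 := by linarith [hp i]
    rw [show c i k = p i k / (1 - p i 0) from if_neg hk,
      abs_of_nonneg (div_nonneg (hp0 i k) hp'.le), div_le_one hp']
    linarith
  have hp_le : ∀ i k, |p i k| ≤ 1 := fun i k => by
    rw [abs_of_nonneg (hp0 i k)]; exact le_hasSum (hp1 i) k fun j _ => hp0 i j
  have hc_eq : ∀ i u, |u| < 1 →
      ∑' k, c i k * u ^ k = (∑' k, p i k * u ^ k - p i 0) / (1 - p i 0) := by
    intro i u hu
    rw [(summable_mul_pow (hc i) hu).tsum_eq_zero_add,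
      (summable_mul_pow (hp_le i) hu).tsum_eq_zero_add]
    simp [hc_def, div_mul_eq_mul_div, tsum_div_const]
  have hs : |s| < 1 := abs_lt.mpr ⟨by linarith, hs1⟩
  have hderiv : ∀ i, deriv (fun u => ∑' k, p i k * u ^ k) s / (1 - p i 0)
      = ∑' k : ℕ, c i k * (k * s ^ (k - 1)) := by
    intro i
    have hnear : (fun u => ∑' k, c i k * u ^ k)
        =ᶠ[𝓝 s] fun u => (∑' k, p i k * u ^ k - p i 0) / (1 - p i 0) := by
      filter_upwards [Ioo_mem_nhds (by linarith : -1 < s) hs1] with u hu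
      exact hc_eq i u (abs_lt.mpr hu)
    rw [← (hasDerivAt_tsum_mul_pow (hc i) hs).deriv, hnear.deriv_eq, deriv_div_const,
      deriv_sub_const]
  simp_rw [hderiv]
  refine tendsto_of_sq_bound_of_hasDerivWithinAt (δ := (1 - s) / 2) (C := 8 / (1 - s) ^ 3)
    (f := fun i u => ∑' k, c i k * u ^ k) (by linarith) (fun i u hu => ?_) (fun u hu => ?_)
    (hasDerivAt_tsum_mul_pow hα hs).differentiableAt.hasDerivAt.hasDerivWithinAt
  · refine (abs_tsum_mul_pow_sub_sub_le (hc i) hs0 hu.1.le hu.2.le (by linarith)).trans_eq ?_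
    field_simp
    ring
  · have hu1 : u < 1 := by linarith [hu.2]
    simpa only [hc_eq _ u (abs_lt.mpr ⟨by linarith [hu.1], hu1⟩)] using hconv u ⟨hu.1, hu1⟩

theorem tendsto_natCast_mul_mul_pow_div_one_sub_pow {ι : Type*} {l : Filter ι} {D a b : ι → ℝ}
    {L : ℝ} {n : ℕ} (hn : n ≠ 0) (hD : Tendsto (fun i => D i / (1 - b i)) l (𝓝 L))
    (ha : Tendsto a l (𝓝 1)) (hb : Tendsto b l (𝓝 1)) :
    Tendsto (fun i => n * D i * a i ^ (n - 1) / (1 - b i ^ n)) l (𝓝 L) := by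
  have hgeom : Tendsto (fun i => ∑ j ∈ Finset.range n, b i ^ j) l (𝓝 n) := by
    simpa using tendsto_finsetSum (Finset.range n) fun j _ => hb.pow j
  have hlim := (hD.mul ((ha.pow (n - 1)).const_mul (n : ℝ))).div hgeom (Nat.cast_ne_zero.mpr hn)
  rw [one_pow, mul_one, mul_div_cancel_right₀ L (Nat.cast_ne_zero.mpr hn)] at hlim
  refine hlim.congr fun i => ?_
  rw [Pi.div_apply, ← mul_neg_geom_sum]
  field_simp

theorem hasDerivWithinAt_tsum_mul_pow_one {α : ℕ → ℝ} (hα0 : ∀ k, 0 ≤ α k) (hα : Summable α)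
    (hαm : Summable fun k : ℕ => (k : ℝ) * α k) :
    HasDerivWithinAt (fun x => ∑' k, α k * x ^ k) (∑' k : ℕ, (k : ℝ) * α k) (Iio 1) 1 := by
  rw [hasDerivWithinAt_iff_tendsto_slope' (by simp : (1 : ℝ) ∉ Iio 1)]
  have hnear : ∀ᶠ y in 𝓝[<] (1 : ℝ), y ∈ Ioo 0 1 := Ioo_mem_nhdsLT one_pos
  have hslope : ∀ᶠ y in 𝓝[<] (1 : ℝ), ∑' k, α k * ∑ j ∈ Finset.range k, y ^ j
      = slope (fun x => ∑' k, α k * x ^ k) 1 y := by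
    filter_upwards [hnear] with y hy
    have hαy : Summable fun k => α k * y ^ k := hα.of_nonneg_of_le
      (fun k => mul_nonneg (hα0 k) (pow_nonneg hy.1.le k))
      (fun k => mul_le_of_le_one_right (hα0 k) (pow_le_one₀ hy.1.le hy.2.le))
    rw [slope_def_field, ← hαy.tsum_sub (by simpa using hα), ← tsum_div_const]
    refine tsum_congr fun k => ?_
    rw [eq_div_iff (sub_ne_zero.mpr hy.2.ne), one_pow, mul_assoc, geom_sum_mul]
    ring
  refine Tendsto.congr' hslope (tendsto_tsum_of_dominated_convergence hαm (fun k => ?_) ?_)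
  · have := ((continuous_finsetSum (Finset.range k) fun j _ =>
      continuous_pow (M := ℝ) j).tendsto 1).mono_left (nhdsWithin_le_nhds (s := Iio 1))
    simpa [mul_comm] using this.const_mul (α k)
  · filter_upwards [hnear] with y hy k
    have hsum : 0 ≤ ∑ j ∈ Finset.range k, y ^ j := Finset.sum_nonneg fun j _ => pow_nonneg hy.1.le j
    rw [Real.norm_eq_abs, abs_of_nonneg (mul_nonneg (hα0 k) hsum), mul_comm]
    gcongr
    · exact hα0 k
    · calc ∑ j ∈ Finset.range k, y ^ j ≤ ∑ j ∈ Finset.range k, (1 : ℝ) :=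
          Finset.sum_le_sum fun j _ => pow_le_one₀ hy.1.le hy.2.le
        _ = k := by simp

theorem coalescence_stmt15_general (p : ℝ → ℕ → ℝ) (α : ℕ → ℝ)
    (hp0 : ∀ t k, 0 ≤ p t k)
    (hp1 : ∀ t, ∑' k, p t k = 1)
    (hα0 : ∀ k, 0 ≤ α k)
    (hα1 : ∑' k, α k = 1)
    (hαm : Summable fun k : ℕ => (k : ℝ) * α k) :
    let ψ : ℝ → ℝ → ℝ := fun t s => ∑' k, p t k * s ^ k
    let g : ℝ → ℝ := fun s => ∑' k, α k * s ^ k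
    (∀ t, ψ t 0 < 1) →
    Tendsto (fun t => ψ t 0) atTop (𝓝 1) →
    (∀ s ∈ Icc (0:ℝ) 1,
      Tendsto (fun t => (ψ t s - ψ t 0) / (1 - ψ t 0)) atTop (𝓝 (g s))) →
    (∀ x : ℕ, 1 ≤ x → ∀ s ∈ Ico (0:ℝ) 1,
        Tendsto
          (fun t => (x : ℝ) * deriv (ψ t) s * (ψ t s) ^ (x - 1) / (1 - (ψ t 0) ^ x))
          atTop (𝓝 (deriv g s))) ∧
      (∀ s ∈ Ico (0:ℝ) 1, deriv g s ≤ ∑' k : ℕ, (k : ℝ) * α k) ∧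
      HasDerivWithinAt g (∑' k : ℕ, (k : ℝ) * α k) (Iio 1) 1 := by
  intro ψ g hψ0 hψ0_lim hconv
  simp only [ψ, tsum_mul_zero_pow] at hψ0 hψ0_lim hconv ⊢
  have hα : HasSum α 1 := hasSum_of_tsum_eq_one hα1
  have hα_le : ∀ k, |α k| ≤ 1 := fun k => by
    rw [abs_of_nonneg (hα0 k)]; exact le_hasSum hα k fun j _ => hα0 j
  refine ⟨fun x hx s hs => ?_, fun s hs => ?_,
    hasDerivWithinAt_tsum_mul_pow_one hα0 hα.summable hαm⟩
  · have hψs : Tendsto (fun t => ∑' k, p t k * s ^ k) atTop (𝓝 1) := by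
      have := ((hconv s (Ico_subset_Icc_self hs)).mul (hψ0_lim.const_sub 1)).add hψ0_lim
      rw [sub_self, mul_zero, zero_add] at this
      refine this.congr fun t => ?_
      rw [div_mul_cancel₀ _ (by linarith [hψ0 t])]
      ring
    exact tendsto_natCast_mul_mul_pow_div_one_sub_pow (by omega)
      (tendsto_deriv_tsum_mul_pow_div_one_sub hp0 (fun t => hasSum_of_tsum_eq_one (hp1 t)) hψ0
        hα_le hs.1 hs.2 fun u hu => hconv u ⟨hs.1.trans hu.1, hu.2.le⟩)
      hψs hψ0_lim
  · have hs' : |s| < 1 := abs_lt.mpr ⟨by linarith [hs.1], hs.2⟩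
    rw [(hasDerivAt_tsum_mul_pow hα_le hs').deriv]
    refine (summable_mul_natCast_mul_pow_sub_one hα_le hs').tsum_le_tsum (fun k => ?_) hαm
    rw [← mul_assoc, mul_comm (k : ℝ)]
    exact mul_le_of_le_one_right (mul_nonneg (hα0 k) k.cast_nonneg) (pow_le_one₀ hs.1 hs.2.le)

/-- For probability generating functions ψ_t(s) = Σ p_k(t) s^k with
ψ_t(0) < 1 and ψ_t(0) → 1, and g(s) = Σ_{k≥1} α_k s^k a probability generating
function with finite mean Σ k α_k, such that (ψ_t(s) − ψ_t(0))/(1 − ψ_t(0)) → g(s)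
for all s ∈ [0,1], one has for every integer x ≥ 1 and s ∈ [0,1):
x·ψ_t'(s)·ψ_t(s)^{x−1}/(1 − ψ_t(0)^x) → g'(s), and g'(s) ≤ g'(1) = Σ k α_k < ∞. -/
theorem coalescence_stmt15 (p : ℝ → ℕ → ℝ) (α : ℕ → ℝ)
    (hp0 : ∀ t k, 0 ≤ p t k)
    (hp1 : ∀ t, ∑' k, p t k = 1)
    (hα0 : ∀ k, 0 ≤ α k) (hα00 : α 0 = 0)
    (hα1 : ∑' k, α k = 1)
    (hαm : Summable fun k : ℕ => (k : ℝ) * α k) :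
    let ψ : ℝ → ℝ → ℝ := fun t s => ∑' k, p t k * s ^ k
    let g : ℝ → ℝ := fun s => ∑' k, α k * s ^ k
    (∀ t, ψ t 0 < 1) →
    Tendsto (fun t => ψ t 0) atTop (𝓝 1) →
    (∀ s ∈ Icc (0:ℝ) 1,
      Tendsto (fun t => (ψ t s - ψ t 0) / (1 - ψ t 0)) atTop (𝓝 (g s))) →
    (∀ x : ℕ, 1 ≤ x → ∀ s ∈ Ico (0:ℝ) 1,
        Tendsto
          (fun t => (x : ℝ) * deriv (ψ t) s * (ψ t s) ^ (x - 1) / (1 - (ψ t 0) ^ x))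
          atTop (𝓝 (deriv g s))) ∧
      (∀ s ∈ Ico (0:ℝ) 1, deriv g s ≤ ∑' k : ℕ, (k : ℝ) * α k) ∧
      HasDerivWithinAt g (∑' k : ℕ, (k : ℝ) * α k) (Iio 1) 1 :=
  coalescence_stmt15_general p α hp0 hp1 hα0 hα1 hαm
end

section
/- For every integer n ≥ 1: Σ_{i=1}^{n} C(n+1, i) · C(n−1, i−1) · (i−1)! · i! · (n−i)! · (n−i+1)! = n! · (n+1)!, where C(a, b) denotes the binomial coefficient a choose b. -/
open Nat

/-- For every n ≥ 1,
Σ_{i=1}^{n} C(n+1,i)·C(n−1,i−1)·(i−1)!·i!·(n−i)!·(n−i+1)! = n!·(n+1)!. -/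
theorem coalescence_stmt16 : ∀ n : ℕ, 1 ≤ n →
    ∑ i ∈ Finset.Icc 1 n,
        Nat.choose (n + 1) i * Nat.choose (n - 1) (i - 1) *
          Nat.factorial (i - 1) * Nat.factorial i *
          Nat.factorial (n - i) * Nat.factorial (n - i + 1)
      = Nat.factorial n * Nat.factorial (n + 1) := by
  intro n hn
  have key : ∀ i ∈ Finset.Icc 1 n,
      Nat.choose (n + 1) i * Nat.choose (n - 1) (i - 1) *
          Nat.factorial (i - 1) * Nat.factorial i *
          Nat.factorial (n - i) * Nat.factorial (n - i + 1)
      = Nat.factorial (n + 1) * Nat.factorial (n - 1) := by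
    intro i hi
    simp only [Finset.mem_Icc] at hi
    obtain ⟨h1, h2⟩ := hi
    have e1 : n - i + 1 = n + 1 - i := by omega
    have h3 : Nat.choose (n+1) i * Nat.factorial i * Nat.factorial (n+1-i)
        = Nat.factorial (n+1) := Nat.choose_mul_factorial_mul_factorial (by omega)
    have h4 : Nat.choose (n-1) (i-1) * Nat.factorial (i-1) * Nat.factorial (n-1-(i-1))
        = Nat.factorial (n-1) := Nat.choose_mul_factorial_mul_factorial (by omega)
    have e2 : n - 1 - (i - 1) = n - i := by omega
    rw [e2] at h4
    rw [e1, ← h3, ← h4]; ring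
  rw [Finset.sum_congr rfl key, Finset.sum_const, Nat.card_Icc]
  have hmn : n * Nat.factorial (n - 1) = Nat.factorial n := Nat.mul_factorial_pred (by omega)
  have : n + 1 - 1 = n := by omega
  rw [this, smul_eq_mul]
  calc n * (Nat.factorial (n+1) * Nat.factorial (n-1))
      = (n * Nat.factorial (n-1)) * Nat.factorial (n+1) := by ring
    _ = Nat.factorial n * Nat.factorial (n+1) := by rw [hmn]
end
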